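/- arXiv:math/0206171 — 9 statements merged into one kernel-verified Lean document; each statement's English description precedes it below -/
import Mathlib

section
/- For 0 < q < 1, Re(t) > 0, and any complex s, the series ∑_{n=1}^∞ q^{nt}/[n]_q^s, where [n]_q = (1-q^n)/(1-q), converges absolutely and equals (1-q)^s · ∑_{r=0}^∞ C(s+r-1, r) · q^{t+r}/(1-q^{t+r}), where C(s+r-1,r) is the generalized binomial coefficient. -/
/-! Writing `[n]_q ^ (-s) = (1 - q) ^ s (1 - q ^ n) ^ (-s)` and expanding `(1 - q ^ n) ^ (-s)` by
the binomial series turns the left-hand side into the double series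
`(1 - q) ^ s ∑_{n ≥ 1} ∑_r C(s + r - 1, r) (q ^ (t + r)) ^ n`. It converges absolutely, its terms
being dominated by `(q ^ Re t) ^ (n - 1) |C(s + r - 1, r)| q ^ r`, so the order of summation may be
swapped; summing over `n` first is a geometric series in `q ^ (t + r)`. -/

open Complex
open scoped Nat

lemma ascPochhammer_eval_div_factorial {K : Type*} [Field K] [CharZero K] (s : K) (r : ℕ) :
    (ascPochhammer K r).eval s / r ! = Ring.choose (s + r - 1) r := by
  rw [← Ring.multichoose_eq, ← Polynomial.ascPochhammer_smeval_eq_eval,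
    ← Ring.factorial_nsmul_multichoose_eq_ascPochhammer, nsmul_eq_mul]
  exact mul_div_cancel_left₀ _ (Nat.cast_ne_zero.2 r.factorial_ne_zero)

lemma Complex.hasSum_ascPochhammer_div_factorial_mul_pow (s : ℂ) {x : ℂ} (hx : ‖x‖ < 1) :
    HasSum (fun r : ℕ => (ascPochhammer ℂ r).eval s / r ! * x ^ r) ((1 - x) ^ s)⁻¹ := by
  have h := (one_div_one_sub_cpow_hasFPowerSeriesOnBall_zero s).hasSum
    (y := x) (by simpa [← ofReal_norm] using hx)
  simpa [FormalMultilinearSeries.ofScalars_apply_eq, ascPochhammer_eval_div_factorial,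
    mul_comm] using h

lemma hasSum_mul_pow_succ {K : Type*} [NormedField K] [CompleteSpace K] (b : K) {z : K}
    (hz : ‖z‖ < 1) : HasSum (fun n : ℕ => b * z ^ (n + 1)) (b * (z / (1 - z))) := by
  simpa only [pow_succ', ← mul_assoc, div_eq_mul_inv] using
    (hasSum_geometric_of_norm_lt_one hz).mul_left (b * z)

lemma summable_norm_of_hasSum_fiberwise {β γ E : Type*} [SeminormedAddCommGroup E]
    {f : β → γ → E} (hf : Summable fun p : β × γ => ‖f p.1 p.2‖) {g : β → E}
    (hg : ∀ b, HasSum (f b) (g b)) : Summable fun b => ‖g b‖ :=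
  Summable.of_nonneg_of_le (fun _ => norm_nonneg _)
    (fun b => (hg b).norm_le_of_bounded (hf.prod_factor b).hasSum fun _ => le_rfl) hf.prod

lemma Complex.cpow_add_natCast_pow {x : ℂ} (hx : x ≠ 0) (t : ℂ) (n r : ℕ) :
    (x ^ (t + r)) ^ (n + 1) = x ^ ((n + 1) * t) * (x ^ (n + 1)) ^ r := by
  rw [cpow_add _ _ hx, cpow_natCast, mul_pow, ← pow_mul, ← pow_mul, mul_comm r,
    ← Nat.cast_add_one, cpow_nat_mul]

lemma div_one_sub_pow_div_one_sub_cpow {q : ℝ} (hq0 : 0 ≤ q) (hq1 : q ≤ 1) (x s : ℂ) (n : ℕ) :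
    x / ((1 - (q : ℂ) ^ n) / (1 - q)) ^ s = (1 - q) ^ s * (x * ((1 - (q : ℂ) ^ n) ^ s)⁻¹) := by
  have h := div_cpow_ofReal_nonneg (sub_nonneg.2 (pow_le_one₀ hq0 hq1 (n := n)))
    (sub_nonneg.2 hq1) s
  push_cast at h
  rw [h, div_div_eq_mul_div]
  ring

lemma norm_ofReal_cpow_lt_one {q : ℝ} (hq0 : 0 < q) (hq1 : q < 1) {w : ℂ} (hw : 0 < w.re) :
    ‖(q : ℂ) ^ w‖ < 1 := by
  rw [norm_cpow_eq_rpow_re_of_pos hq0]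
  exact Real.rpow_lt_one hq0.le hq1 hw

-- Dominated by `(q ^ t.re) ^ n * ‖b r * q ^ r‖`, a product of two summable sequences.
lemma summable_norm_mul_cpow_add_natCast_pow {q : ℝ} (hq0 : 0 < q) (hq1 : q < 1) {t : ℂ}
    (ht : 0 < t.re) {b : ℕ → ℂ} (hb : Summable fun r => ‖b r * (q : ℂ) ^ r‖) :
    Summable fun p : ℕ × ℕ => ‖b p.2 * ((q : ℂ) ^ (t + p.2)) ^ (p.1 + 1)‖ := by
  have hqt : q ^ t.re < 1 := Real.rpow_lt_one hq0.le hq1 ht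
  have hgeom := summable_geometric_of_lt_one (by positivity) hqt
  refine Summable.of_nonneg_of_le (fun _ => norm_nonneg _) (fun ⟨n, r⟩ => ?_)
    (hgeom.mul_of_nonneg hb (fun _ => by positivity) fun _ => by positivity)
  have hqr : q ^ r ≤ 1 := pow_le_one₀ hq0.le hq1.le
  calc ‖b r * ((q : ℂ) ^ (t + r)) ^ (n + 1)‖
      = ‖b r‖ * ((q ^ t.re) ^ (n + 1) * (q ^ r) ^ (n + 1)) := by
        rw [norm_mul, norm_pow, norm_cpow_eq_rpow_re_of_pos hq0, add_re, natCast_re,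
          Real.rpow_add hq0, Real.rpow_natCast, mul_pow]
    _ ≤ ‖b r‖ * ((q ^ t.re) ^ n * q ^ r) := by
        gcongr ‖b r‖ * ?_
        exact mul_le_mul (pow_le_pow_of_le_one (by positivity) hqt.le n.le_succ)
          (pow_le_of_le_one (by positivity) hqr n.succ_ne_zero) (by positivity) (by positivity)
    _ = (q ^ t.re) ^ n * ‖b r * (q : ℂ) ^ r‖ := by
        rw [norm_mul, norm_pow, norm_real, Real.norm_of_nonneg hq0.le]
        ring

lemma hasSum_ascPochhammer_div_factorial_mul_cpow_add_natCast_pow {q : ℝ} (hq0 : 0 < q)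
    (hq1 : q < 1) (s t : ℂ) (n : ℕ) :
    HasSum (fun r : ℕ => (ascPochhammer ℂ r).eval s / r ! * ((q : ℂ) ^ (t + r)) ^ (n + 1))
      ((q : ℂ) ^ ((n + 1) * t) * ((1 - (q : ℂ) ^ (n + 1)) ^ s)⁻¹) := by
  have hqn : ‖(q : ℂ) ^ (n + 1)‖ < 1 := by
    rw [norm_pow, norm_real, Real.norm_of_nonneg hq0.le]
    exact pow_lt_one₀ hq0.le hq1 n.succ_ne_zero
  refine ((hasSum_ascPochhammer_div_factorial_mul_pow s hqn).mul_left
    ((q : ℂ) ^ ((n + 1) * t))).congr_fun fun r => ?_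
  rw [cpow_add_natCast_pow (ofReal_ne_zero.2 hq0.ne')]
  ring

theorem stmt_0 (q : ℝ) (hq0 : 0 < q) (hq1 : q < 1) (s t : ℂ) (ht : 0 < t.re) :
    Summable (fun n : ℕ =>
      ‖(q : ℂ) ^ (((n : ℂ) + 1) * t) / (((1 - (q : ℂ) ^ (n + 1)) / (1 - (q : ℂ))) ^ s)‖) ∧
    ∑' n : ℕ, (q : ℂ) ^ (((n : ℂ) + 1) * t) / (((1 - (q : ℂ) ^ (n + 1)) / (1 - (q : ℂ))) ^ s)
      = (1 - (q : ℂ)) ^ s *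
        ∑' r : ℕ, ((ascPochhammer ℂ r).eval s / (r.factorial : ℂ)) *
          ((q : ℂ) ^ (t + (r : ℂ)) / (1 - (q : ℂ) ^ (t + (r : ℂ)))) := by
  set b : ℕ → ℂ := fun r => (ascPochhammer ℂ r).eval s / (r ! : ℂ)
  set f : ℕ → ℕ → ℂ := fun n r => b r * ((q : ℂ) ^ (t + r)) ^ (n + 1)
  have hq : ‖(q : ℂ)‖ < 1 := by rwa [norm_real, Real.norm_of_nonneg hq0.le]
  have hf : Summable fun p : ℕ × ℕ => ‖f p.1 p.2‖ := summable_norm_mul_cpow_add_natCast_pow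
    hq0 hq1 ht (summable_norm_iff.2 (hasSum_ascPochhammer_div_factorial_mul_pow s hq).summable)
  have hcol (n : ℕ) := hasSum_ascPochhammer_div_factorial_mul_cpow_add_natCast_pow hq0 hq1 s t n
  have hrow (r : ℕ) :
      HasSum (fun n => f n r) (b r * ((q : ℂ) ^ (t + r) / (1 - (q : ℂ) ^ (t + r)))) := by
    refine hasSum_mul_pow_succ (b r) (norm_ofReal_cpow_lt_one hq0 hq1 ?_)
    rw [add_re, natCast_re]
    exact add_pos_of_pos_of_nonneg ht r.cast_nonneg
  simp_rw [fun n : ℕ => div_one_sub_pow_div_one_sub_cpow hq0.le hq1.le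
    ((q : ℂ) ^ ((n + 1) * t)) s (n + 1)]
  refine ⟨((summable_norm_of_hasSum_fiberwise hf hcol).mul_left ‖(1 - (q : ℂ)) ^ s‖).congr
    fun n => (norm_mul _ _).symm, ?_⟩
  calc _ = (1 - (q : ℂ)) ^ s * ∑' n, ∑' r, f n r := by
        rw [tsum_mul_left]; exact congrArg _ (tsum_congr fun n => (hcol n).tsum_eq.symm)
    _ = (1 - (q : ℂ)) ^ s * ∑' r, ∑' n, f n r := by
        rw [Summable.tsum_comm (f := f) hf.of_norm]
    _ = _ := by rw [tsum_congr fun r => (hrow r).tsum_eq]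
end

section
/- For 0 < q < 1, the function ζ_q(s) = (1-q)^s ∑_{r=0}^∞ C(s+r-1,r) q^{s+r-1}/(1-q^{s+r-1}) has a simple pole at s = 1 with residue (q-1)/log q. -/
/-!
Only the `r = 0` summand `q^(s-1)/(1 - q^(s-1))` is singular at `s = 1`: since `q^(s-1) - 1`
has derivative `log q` there, `(s - 1)` times it tends to `-1/log q`. For `r ≥ 1` and
`|s - 1| ≤ 1/2` the summands are bounded by `(r + 2) q^r / (1 - √q)`, so by dominated
convergence their sum is continuous at `s = 1` and is killed by the factor `s - 1`.
Multiplying by `(1 - q)^s → 1 - q` gives the residue `(q - 1)/log q`.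
-/

/-- The meromorphic continuation of the `q`-zeta function:
`ζ_q(s) = (1-q)^s ∑_{r≥0} C(s+r-1,r) q^{s+r-1}/(1-q^{s+r-1})`,
where `C(s+r-1,r) = (s)_r / r!` (rising factorial). -/
noncomputable def zetaQc (q : ℝ) (s : ℂ) : ℂ :=
  (1 - (q : ℂ)) ^ s *
    ∑' r : ℕ, ((ascPochhammer ℂ r).eval s / (r.factorial : ℂ)) *
      ((q : ℂ) ^ (s + (r : ℂ) - 1) / (1 - (q : ℂ) ^ (s + (r : ℂ) - 1)))

open Complex Filter Topology

lemma norm_ascPochhammer_eval_le {R : Type*} [NormedRing R] [NormOneClass R] {s : R} {t : ℝ}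
    (hs : ‖s‖ ≤ t) (r : ℕ) : ‖(ascPochhammer R r).eval s‖ ≤ (ascPochhammer ℝ r).eval t := by
  induction r with
  | zero => simp
  | succ n ih =>
    rw [ascPochhammer_succ_eval, ascPochhammer_succ_eval]
    have hfactor : ‖s + n‖ ≤ t + n :=
      (norm_add_le _ _).trans (add_le_add hs (by simpa using Nat.norm_cast_le (α := R) n))
    exact (norm_mul_le _ _).trans
      (mul_le_mul ih hfactor (norm_nonneg _) ((norm_nonneg _).trans ih))

lemma norm_ascPochhammer_eval_div_factorial_le {s : ℂ} (hs : ‖s‖ ≤ 2) (r : ℕ) :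
    ‖(ascPochhammer ℂ r).eval s / (r.factorial : ℂ)‖ ≤ r + 1 := by
  have heval : (ascPochhammer ℝ r).eval 2 = ((r + 1).factorial : ℝ) := by
    simpa [one_add_one_eq_two, add_comm] using factorial_mul_ascPochhammer ℝ 1 r
  rw [norm_div, Complex.norm_natCast, div_le_iff₀ (by positivity)]
  calc ‖(ascPochhammer ℂ r).eval s‖ ≤ ((r + 1).factorial : ℝ) :=
        heval ▸ norm_ascPochhammer_eval_le hs r
    _ = (r + 1) * r.factorial := by push_cast [Nat.factorial_succ]; ring

lemma one_sub_cpow_ne_zero {q : ℝ} (hq0 : 0 < q) (hq1 : q < 1) {y : ℂ} (hy : 0 < y.re) :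
    1 - (q : ℂ) ^ y ≠ 0 := by
  intro h
  have := congrArg norm (sub_eq_zero.mp h).symm
  rw [norm_cpow_eq_rpow_re_of_pos hq0, norm_one] at this
  exact (Real.rpow_lt_one hq0.le hq1 hy).ne this

lemma norm_cpow_div_one_sub_cpow_le {q : ℝ} (hq0 : 0 < q) (hq1 : q < 1) {y : ℂ} {c : ℝ}
    (hc : 0 < c) (hy : c ≤ y.re) :
    ‖(q : ℂ) ^ y / (1 - (q : ℂ) ^ y)‖ ≤ q ^ y.re / (1 - q ^ c) := by
  have hle : q ^ y.re ≤ q ^ c := Real.rpow_le_rpow_of_exponent_ge hq0 hq1.le hy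
  have hlt : q ^ c < 1 := Real.rpow_lt_one hq0.le hq1 hc
  have hden : 1 - q ^ c ≤ ‖1 - (q : ℂ) ^ y‖ := by
    have := norm_sub_norm_le (1 : ℂ) ((q : ℂ) ^ y)
    rw [norm_one, norm_cpow_eq_rpow_re_of_pos hq0] at this
    linarith
  rw [norm_div, norm_cpow_eq_rpow_re_of_pos hq0]
  exact div_le_div₀ (by positivity) le_rfl (by linarith) hden

lemma tendsto_sub_one_mul_cpow_div_one_sub_cpow {c : ℂ} (hc : c ≠ 0) (hlog : log c ≠ 0) :
    Tendsto (fun s : ℂ => (s - 1) * (c ^ (s - 1) / (1 - c ^ (s - 1)))) (𝓝[≠] 1)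
      (𝓝 (-(log c)⁻¹)) := by
  have hderiv : HasDerivAt (fun s : ℂ => c ^ (s - 1)) (log c) 1 := by
    simpa using ((hasDerivAt_id (1 : ℂ)).sub_const 1).const_cpow (Or.inl hc)
  have hslope : Tendsto (fun s : ℂ => (c ^ (s - 1) - 1) / (s - 1)) (𝓝[≠] 1) (𝓝 (log c)) := by
    simpa [slope_fun_def_field] using hasDerivAt_iff_tendsto_slope.mp hderiv
  have hpow : Tendsto (fun s : ℂ => c ^ (s - 1)) (𝓝[≠] 1) (𝓝 1) := by
    simpa using hderiv.continuousAt.tendsto.mono_left nhdsWithin_le_nhds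
  have := ((hslope.inv₀ hlog).neg).mul hpow
  rw [mul_one] at this
  refine this.congr fun s => ?_
  rw [inv_div, ← neg_sub (c ^ (s - 1)) 1, div_neg]
  ring

noncomputable def zetaQcTerm (q : ℝ) (s : ℂ) (r : ℕ) : ℂ :=
  ((ascPochhammer ℂ r).eval s / (r.factorial : ℂ)) *
    ((q : ℂ) ^ (s + (r : ℂ) - 1) / (1 - (q : ℂ) ^ (s + (r : ℂ) - 1)))

lemma zetaQc_eq_mul_tsum (q : ℝ) (s : ℂ) :
    zetaQc q s = (1 - (q : ℂ)) ^ s * ∑' r, zetaQcTerm q s r := rfl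

section

variable {q : ℝ}

lemma norm_zetaQcTerm_succ_le (hq0 : 0 < q) (hq1 : q < 1) {s : ℂ} (hs : ‖s - 1‖ ≤ 1 / 2)
    (r : ℕ) :
    ‖zetaQcTerm q s (r + 1)‖ ≤ (r + 2) * q ^ r / (1 - q ^ (1 / 2 : ℝ)) := by
  have hs2 : ‖s‖ ≤ 2 := by
    have := norm_add_le (s - 1) 1
    rw [sub_add_cancel, norm_one] at this
    linarith
  have hre : r + 1 / 2 ≤ (s + ((r + 1 : ℕ) : ℂ) - 1).re := by
    have := (abs_le.mp ((abs_re_le_norm (s - 1)).trans hs)).1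
    simp only [sub_re, add_re, one_re, natCast_re] at this ⊢
    push_cast
    linarith
  have hpoch := norm_ascPochhammer_eval_div_factorial_le hs2 (r + 1)
  have hquot := norm_cpow_div_one_sub_cpow_le hq0 hq1 one_half_pos
    ((le_add_of_nonneg_left r.cast_nonneg).trans hre)
  have hqr : q ^ (s + ((r + 1 : ℕ) : ℂ) - 1).re ≤ q ^ r := by
    rw [← Real.rpow_natCast]
    exact Real.rpow_le_rpow_of_exponent_ge hq0 hq1.le (by linarith)
  have hden : 0 < 1 - q ^ (1 / 2 : ℝ) := sub_pos.mpr (Real.rpow_lt_one hq0.le hq1 one_half_pos)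
  rw [zetaQcTerm, norm_mul, mul_div_assoc]
  push_cast at hpoch hquot hqr ⊢
  refine mul_le_mul (by linarith) (hquot.trans ?_) (norm_nonneg _) (by positivity)
  exact div_le_div_of_nonneg_right hqr hden.le

lemma summable_zetaQcTerm_bound (hq0 : 0 < q) (hq1 : q < 1) :
    Summable fun r : ℕ => (r + 2) * q ^ r / (1 - q ^ (1 / 2 : ℝ)) := by
  have hq : ‖q‖ < 1 := by rwa [Real.norm_of_nonneg hq0.le]
  have := (summable_pow_mul_geometric_of_norm_lt_one 1 hq).add
    ((summable_geometric_of_lt_one hq0.le hq1).mul_left 2)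
  exact (this.congr fun r => by ring).div_const _

lemma continuousAt_zetaQcTerm_succ (hq0 : 0 < q) (hq1 : q < 1) (r : ℕ) :
    ContinuousAt (fun s => zetaQcTerm q s (r + 1)) 1 := by
  have hq : (q : ℂ) ≠ 0 := ofReal_ne_zero.mpr hq0.ne'
  have hpow : Continuous fun s : ℂ => (q : ℂ) ^ (s + ((r + 1 : ℕ) : ℂ) - 1) :=
    Continuous.const_cpow (by fun_prop) (.inl hq)
  refine ((Polynomial.continuous _).div_const _).continuousAt.mul
    (hpow.continuousAt.div (continuous_const.sub hpow).continuousAt ?_)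
  exact one_sub_cpow_ne_zero hq0 hq1 (by simpa using r.cast_add_one_pos)

lemma continuousAt_tsum_zetaQcTerm_succ (hq0 : 0 < q) (hq1 : q < 1) :
    ContinuousAt (fun s => ∑' r, zetaQcTerm q s (r + 1)) 1 := by
  refine tendsto_tsum_of_dominated_convergence (summable_zetaQcTerm_bound hq0 hq1)
    (fun r => continuousAt_zetaQcTerm_succ hq0 hq1 r) ?_
  filter_upwards [Metric.closedBall_mem_nhds (1 : ℂ) one_half_pos] with s hs
  exact norm_zetaQcTerm_succ_le hq0 hq1 (by rwa [← dist_eq_norm])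

end

theorem stmt_3 (q : ℝ) (hq0 : 0 < q) (hq1 : q < 1) :
    Filter.Tendsto (fun s : ℂ => (s - 1) * zetaQc q s) (nhdsWithin 1 {1}ᶜ)
      (nhds (((q : ℂ) - 1) / (Real.log q : ℂ))) := by
  have hlog : log (q : ℂ) = (Real.log q : ℂ) := (ofReal_log hq0.le).symm
  have hpole : Tendsto (fun s : ℂ => (s - 1) * zetaQcTerm q s 0) (𝓝[≠] 1)
      (𝓝 (-(Real.log q : ℂ)⁻¹)) := by
    have hlog0 : log (q : ℂ) ≠ 0 := by
      rw [hlog]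
      exact ofReal_ne_zero.mpr (Real.log_neg hq0 hq1).ne
    simpa [zetaQcTerm, hlog] using
      tendsto_sub_one_mul_cpow_div_one_sub_cpow (ofReal_ne_zero.mpr hq0.ne') hlog0
  have htail : Tendsto (fun s : ℂ => (s - 1) * ∑' r, zetaQcTerm q s (r + 1)) (𝓝[≠] 1) (𝓝 0) := by
    simpa using (((continuous_sub_right 1).continuousAt.fun_mul
      (continuousAt_tsum_zetaQcTerm_succ hq0 hq1)).tendsto.mono_left nhdsWithin_le_nhds)
  have hfactor : Tendsto (fun s : ℂ => (1 - (q : ℂ)) ^ s) (𝓝[≠] 1) (𝓝 (1 - q)) := by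
    have hq : 1 - (q : ℂ) ≠ 0 := sub_ne_zero.mpr (ofReal_ne_one.mpr hq1.ne).symm
    simpa using ((continuous_id.const_cpow (.inl hq)).tendsto 1).mono_left nhdsWithin_le_nhds
  have hsplit : ∀ᶠ s in 𝓝[≠] 1, (1 - (q : ℂ)) ^ s * ((s - 1) * zetaQcTerm q s 0 +
      (s - 1) * ∑' r, zetaQcTerm q s (r + 1)) = (s - 1) * zetaQc q s := by
    filter_upwards [nhdsWithin_le_nhds (Metric.closedBall_mem_nhds (1 : ℂ) one_half_pos)]
      with s hs
    have hsum : Summable fun r => zetaQcTerm q s (r + 1) :=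
      (summable_zetaQcTerm_bound hq0 hq1).of_norm_bounded
        (norm_zetaQcTerm_succ_le hq0 hq1 (by rwa [← dist_eq_norm]))
    rw [zetaQc_eq_mul_tsum, tsum_eq_zero_add' hsum]
    ring
  have hvalue : (1 - (q : ℂ)) * (-(Real.log q : ℂ)⁻¹ + 0) = (q - 1) / Real.log q := by ring
  exact hvalue ▸ (hfactor.mul (hpole.add htail)).congr' hsplit
end

section
/- For 0 < q < 1 and a nonnegative integer m, the limit lim_{s→−m} ζ_q(s) exists and equals (1-q)^{-m} [ ∑_{r=0}^m (-1)^r C(m,r)/(q^{m+1-r}−1) + (−1)^{m+1}/((m+1) log q) ]. -/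
/-!
Near `s = -m` the summands of `ζ_q` behave in three ways. For `r ≤ m` they are continuous at
`-m`. For `r = m + 1` the factor `s + m` of `(s)_{m+1}` cancels the simple zero of
`1 - q^{s+m}`, whose derivative there is `-log q`, leaving `(-1)^{m+1} / ((m+1) log q)`.
For `r ≥ m + 2` they vanish at `-m`, because `(-m)_r = 0`, and on `‖s + m‖ ≤ 1/2` they are
dominated by a multiple of `C(r+m, m) q^r`, so by Tannery's theorem their sum tends to `0`.
-/

open Filter Topology

theorem norm_ascPochhammer_eval_le_s4 {s : ℂ} {n : ℕ} (hs : ‖s‖ ≤ n) (r : ℕ) :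
    ‖(ascPochhammer ℂ r).eval s‖ ≤ n.ascFactorial r := by
  induction r with
  | zero => simp
  | succ r ih =>
    rw [ascPochhammer_succ_eval, norm_mul, Nat.ascFactorial_succ, Nat.cast_mul,
      mul_comm (_ + _ : ℕ).cast]
    have : ‖s + r‖ ≤ (n + r : ℕ) := by
      push_cast
      exact (norm_add_le _ _).trans (by simpa using hs)
    gcongr

theorem ascPochhammer_eval_neg_natCast {R : Type*} [CommRing R] (m r : ℕ) :
    (ascPochhammer R r).eval (-(m : R)) = (-1) ^ r * r.factorial * m.choose r := by
  rw [ascPochhammer_eval_neg_eq_descPochhammer, descPochhammer_eval_eq_descFactorial,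
    Nat.descFactorial_eq_factorial_mul_choose]
  push_cast
  ring

theorem Complex.norm_ofReal_cpow_div_one_sub_le {q : ℝ} (hq0 : 0 < q) (hq1 : q < 1) {w : ℂ}
    {t : ℝ} (ht : 0 < t) (htw : t ≤ w.re) :
    ‖(q : ℂ) ^ w / (1 - (q : ℂ) ^ w)‖ ≤ q ^ w.re / (1 - q ^ t) := by
  have hqt : q ^ w.re ≤ q ^ t := Real.rpow_le_rpow_of_exponent_ge hq0 hq1.le htw
  have hlt : q ^ t < 1 := Real.rpow_lt_one hq0.le hq1 ht
  have hden : 1 - q ^ t ≤ ‖1 - (q : ℂ) ^ w‖ := by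
    have := norm_sub_norm_le (1 : ℂ) ((q : ℂ) ^ w)
    rw [norm_one, Complex.norm_cpow_eq_rpow_re_of_pos hq0] at this
    linarith
  rw [norm_div, Complex.norm_cpow_eq_rpow_re_of_pos hq0]
  gcongr

theorem HasDerivAt.tendsto_sub_div_of_eq_zero {𝕜 : Type*} [NontriviallyNormedField 𝕜]
    {g : 𝕜 → 𝕜} {g' a : 𝕜} (hg : HasDerivAt g g' a) (ha : g a = 0) (hg' : g' ≠ 0) :
    Tendsto (fun s => (s - a) / g s) (𝓝[≠] a) (𝓝 g'⁻¹) := by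
  refine ((hasDerivAt_iff_tendsto_slope.1 hg).inv₀ hg').congr fun s => ?_
  rw [slope_def_field, ha, sub_zero, inv_div]

namespace QZeta

noncomputable def term (q : ℝ) (s : ℂ) (r : ℕ) : ℂ :=
  ((ascPochhammer ℂ r).eval s / (r.factorial : ℂ)) *
    ((q : ℂ) ^ (s + (r : ℂ) - 1) / (1 - (q : ℂ) ^ (s + (r : ℂ) - 1)))

theorem zetaQc_eq_mul_tsum_term (q : ℝ) (s : ℂ) :
    zetaQc q s = (1 - (q : ℂ)) ^ s * ∑' r, term q s r := rfl

variable {q : ℝ}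

theorem continuousAt_term (hq0 : 0 < q) (hq1 : q ≠ 1) {m r : ℕ} (hr : r ≠ m + 1) :
    ContinuousAt (fun s => term q s r) (-(m : ℂ)) := by
  have hcpow : ContinuousAt (fun s : ℂ => (q : ℂ) ^ (s + r - 1)) (-(m : ℂ)) :=
    (continuousAt_const_cpow (by exact_mod_cast hq0.ne')).comp (by fun_prop)
  have hden : 1 - (q : ℂ) ^ (-(m : ℂ) + r - 1) ≠ 0 := by
    have hexp : -(m : ℂ) + r - 1 = ((r - m - 1 : ℤ) : ℂ) := by push_cast; ring
    rw [hexp, Complex.cpow_intCast, sub_ne_zero, ne_comm, ← Complex.ofReal_zpow, Ne,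
      Complex.ofReal_eq_one, zpow_eq_one_iff_right₀ hq0.le hq1]
    omega
  exact ((Polynomial.continuousAt _).div_const _).mul
    (hcpow.div (continuousAt_const.sub hcpow) hden)

theorem term_neg_natCast_of_lt (q : ℝ) {m r : ℕ} (hr : m < r) : term q (-(m : ℂ)) r = 0 := by
  simp [term, ascPochhammer_eval_neg_natCast, Nat.choose_eq_zero_of_lt hr]

theorem term_neg_natCast_of_le (hq : q ≠ 0) {m r : ℕ} (hr : r ≤ m) :
    term q (-(m : ℂ)) r = (-1) ^ r * m.choose r / ((q : ℂ) ^ (m + 1 - r) - 1) := by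
  have hqk : (q : ℂ) ^ (m + 1 - r) ≠ 0 := pow_ne_zero _ (by exact_mod_cast hq)
  have hexp : -(m : ℂ) + r - 1 = -((m + 1 - r : ℕ) : ℂ) := by
    rw [Nat.cast_sub (by omega)]; push_cast; ring
  have hfrac : ∀ x : ℂ, x ≠ 0 → x⁻¹ / (1 - x⁻¹) = 1 / (x - 1) := fun x hx => by
    rw [inv_eq_one_div, one_sub_div hx, div_div_div_cancel_right₀ hx]
  rw [term, ascPochhammer_eval_neg_natCast, hexp, Complex.cpow_neg, Complex.cpow_natCast,
    hfrac _ hqk, mul_one_div, mul_assoc, mul_div_assoc,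
    mul_div_cancel_left₀ _ (Nat.cast_ne_zero.2 r.factorial_ne_zero)]

theorem tendsto_term_of_le (hq0 : 0 < q) (hq1 : q ≠ 1) {m r : ℕ} (hr : r ≤ m) :
    Tendsto (fun s => term q s r) (𝓝[≠] (-(m : ℂ)))
      (𝓝 ((-1) ^ r * m.choose r / ((q : ℂ) ^ (m + 1 - r) - 1))) := by
  rw [← term_neg_natCast_of_le hq0.ne' hr]
  exact (continuousAt_term hq0 hq1 (by omega)).tendsto.mono_left nhdsWithin_le_nhds

theorem tendsto_term_succ (hq0 : 0 < q) (hq1 : q ≠ 1) (m : ℕ) :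
    Tendsto (fun s => term q s (m + 1)) (𝓝[≠] (-(m : ℂ)))
      (𝓝 ((-1 : ℂ) ^ (m + 1) / (((m : ℂ) + 1) * (Real.log q : ℂ)))) := by
  have hq : (q : ℂ) ≠ 0 := by exact_mod_cast hq0.ne'
  have hlog : (Real.log q : ℂ) ≠ 0 := by
    exact_mod_cast Real.log_ne_zero_of_pos_of_ne_one hq0 hq1
  have hg : HasDerivAt (fun s : ℂ => 1 - (q : ℂ) ^ (s + m)) (-Real.log q) (-(m : ℂ)) := by
    have := ((Complex.hasStrictDerivAt_const_cpow (Or.inl hq)).hasDerivAt.comp (-(m : ℂ))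
      ((hasDerivAt_id _).add_const (m : ℂ))).const_sub 1
    simpa [← Complex.ofReal_log hq0.le] using this
  have hpole := hg.tendsto_sub_div_of_eq_zero (by simp) (neg_ne_zero.2 hlog)
  have hregular : ContinuousAt (fun s : ℂ =>
      (ascPochhammer ℂ m).eval s / (m + 1).factorial * (q : ℂ) ^ (s + m)) (-(m : ℂ)) :=
    ((Polynomial.continuousAt _).div_const _).mul
      ((continuousAt_const_cpow hq).comp (by fun_prop))
  convert (hregular.tendsto.mono_left nhdsWithin_le_nhds).mul hpole using 2 with s
  · rw [term, ascPochhammer_succ_eval]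
    push_cast
    ring_nf
  · rw [ascPochhammer_eval_neg_natCast, Nat.choose_self, neg_add_cancel, Complex.cpow_zero,
      Nat.factorial_succ]
    have : (m.factorial : ℂ) ≠ 0 := Nat.cast_ne_zero.2 m.factorial_ne_zero
    push_cast
    field_simp
    ring

theorem norm_term_le (hq0 : 0 < q) (hq1 : q < 1) {m r : ℕ} (hr : m + 2 ≤ r) {s : ℂ}
    (hs : ‖s + m‖ ≤ 1 / 2) :
    ‖term q s r‖ ≤ (r + m).choose m * q ^ r / (q ^ (m + 2) * (1 - q ^ (1 / 2 : ℝ))) := by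
  have hre : (r : ℝ) - m - 3 / 2 ≤ (s + r - 1).re := by
    have := (Complex.abs_re_le_norm (s + m)).trans hs
    simp only [Complex.add_re, Complex.natCast_re] at this
    simp only [Complex.sub_re, Complex.add_re, Complex.natCast_re, Complex.one_re]
    linarith [abs_le.1 this]
  have hpoch : ‖(ascPochhammer ℂ r).eval s‖ / r.factorial ≤ (r + m).choose m := by
    have hs' : ‖s‖ ≤ (m + 1 : ℕ) := by
      have := norm_sub_le (s + m) (m : ℂ)
      rw [add_sub_cancel_right, Complex.norm_natCast] at this
      push_cast
      linarith
    have := norm_ascPochhammer_eval_le_s4 hs' r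
    rw [Nat.ascFactorial_eq_factorial_mul_choose, add_comm m r, Nat.choose_symm_add] at this
    rw [div_le_iff₀ (by positivity)]
    push_cast at this
    linarith
  have hfrac : ‖(q : ℂ) ^ (s + r - 1) / (1 - (q : ℂ) ^ (s + r - 1))‖ ≤
      q ^ r / q ^ (m + 2) / (1 - q ^ (1 / 2 : ℝ)) := by
    refine (Complex.norm_ofReal_cpow_div_one_sub_le hq0 hq1 (t := 1 / 2) (by norm_num)
      (le_trans (by linarith [show (m : ℝ) + 2 ≤ r by exact_mod_cast hr]) hre)).trans ?_
    gcongr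
    · exact sub_nonneg.2 (Real.rpow_le_one hq0.le hq1.le (by norm_num))
    calc q ^ (s + r - 1).re ≤ q ^ ((r : ℝ) - (m + 2 : ℕ)) :=
          Real.rpow_le_rpow_of_exponent_ge hq0 hq1.le (by push_cast; linarith)
      _ = q ^ r / q ^ (m + 2) := by rw [Real.rpow_sub hq0, Real.rpow_natCast, Real.rpow_natCast]
  rw [term, norm_mul, norm_div, Complex.norm_natCast]
  calc _ ≤ (r + m).choose m * (q ^ r / q ^ (m + 2) / (1 - q ^ (1 / 2 : ℝ))) :=
        mul_le_mul hpoch hfrac (norm_nonneg _) (by positivity)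
    _ = _ := by rw [div_div, mul_div_assoc]

theorem summable_term_bound (hq0 : 0 < q) (hq1 : q < 1) (m : ℕ) :
    Summable fun r : ℕ => (r + m).choose m * q ^ r / (q ^ (m + 2) * (1 - q ^ (1 / 2 : ℝ))) :=
  (summable_choose_mul_geometric_of_norm_lt_one (R := ℝ) m
    (by rwa [Real.norm_of_nonneg hq0.le])).div_const _

theorem eventually_norm_add_natCast_le (m : ℕ) :
    ∀ᶠ s : ℂ in 𝓝[≠] (-(m : ℂ)), ‖s + m‖ ≤ 1 / 2 := by
  have : Tendsto (fun s : ℂ => ‖s + m‖) (𝓝 (-(m : ℂ))) (𝓝 0) := by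
    simpa using ((continuous_add_const (m : ℂ)).norm.tendsto (-(m : ℂ)))
  exact (this.eventually (ge_mem_nhds one_half_pos)).filter_mono nhdsWithin_le_nhds

theorem summable_term (hq0 : 0 < q) (hq1 : q < 1) {m : ℕ} {s : ℂ} (hs : ‖s + m‖ ≤ 1 / 2) :
    Summable (term q s) :=
  (summable_nat_add_iff (m + 2)).1 <|
    .of_norm_bounded ((summable_nat_add_iff (m + 2)).2 (summable_term_bound hq0 hq1 m))
      fun j => norm_term_le hq0 hq1 (by omega) hs

theorem tendsto_tsum_term_nat_add (hq0 : 0 < q) (hq1 : q < 1) (m : ℕ) :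
    Tendsto (fun s => ∑' j, term q s (j + (m + 2))) (𝓝[≠] (-(m : ℂ))) (𝓝 0) := by
  have hlim (j : ℕ) :
      Tendsto (fun s => term q s (j + (m + 2))) (𝓝[≠] (-(m : ℂ))) (𝓝 0) := by
    rw [← term_neg_natCast_of_lt q (by omega : m < j + (m + 2))]
    exact (continuousAt_term hq0 hq1.ne (by omega)).tendsto.mono_left nhdsWithin_le_nhds
  simpa using tendsto_tsum_of_dominated_convergence
    ((summable_nat_add_iff (m + 2)).2 (summable_term_bound hq0 hq1 m)) hlim
    (by filter_upwards [eventually_norm_add_natCast_le m] with s hs j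
        exact norm_term_le hq0 hq1 (by omega) hs)

theorem tendsto_tsum_term (hq0 : 0 < q) (hq1 : q < 1) (m : ℕ) :
    Tendsto (fun s => ∑' r, term q s r) (𝓝[≠] (-(m : ℂ)))
      (𝓝 (∑ r ∈ Finset.range (m + 1),
            (-1 : ℂ) ^ r * (m.choose r : ℂ) / ((q : ℂ) ^ (m + 1 - r) - 1)
          + (-1 : ℂ) ^ (m + 1) / (((m : ℂ) + 1) * (Real.log q : ℂ)))) := by
  have hhead := (tendsto_finsetSum (Finset.range (m + 1)) fun r hr =>
    tendsto_term_of_le hq0 hq1.ne (Nat.lt_succ_iff.1 (Finset.mem_range.1 hr))).add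
      (tendsto_term_succ hq0 hq1.ne m)
  have hlim := hhead.add (tendsto_tsum_term_nat_add hq0 hq1 m)
  rw [add_zero] at hlim
  refine hlim.congr' ?_
  filter_upwards [eventually_norm_add_natCast_le m] with s hs
  rw [← (summable_term hq0 hq1 hs).sum_add_tsum_nat_add (m + 2), Finset.sum_range_succ _ (m + 1)]

end QZeta

theorem stmt_4 (q : ℝ) (hq0 : 0 < q) (hq1 : q < 1) (m : ℕ) :
    Filter.Tendsto (fun s : ℂ => zetaQc q s) (nhdsWithin (-(m : ℂ)) {(-(m : ℂ))}ᶜ)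
      (nhds ((1 - (q : ℂ)) ^ (-(m : ℤ)) *
        (∑ r ∈ Finset.range (m + 1),
            (-1 : ℂ) ^ r * (m.choose r : ℂ) / ((q : ℂ) ^ (m + 1 - r) - 1)
          + (-1 : ℂ) ^ (m + 1) / (((m : ℂ) + 1) * (Real.log q : ℂ))))) := by
  have hpow : Tendsto (fun s : ℂ => (1 - (q : ℂ)) ^ s) (𝓝[≠] (-(m : ℂ)))
      (𝓝 ((1 - (q : ℂ)) ^ (-(m : ℤ)))) := by
    have h1q : 1 - (q : ℂ) ≠ 0 := by exact_mod_cast (sub_pos.2 hq1).ne'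
    have := (continuousAt_const_cpow (b := -(m : ℂ)) h1q).tendsto.mono_left
      (nhdsWithin_le_nhds (s := {(-(m : ℂ))}ᶜ))
    rwa [← Complex.cpow_intCast, Int.cast_neg, Int.cast_natCast]
  simp only [QZeta.zetaQc_eq_mul_tsum_term]
  exact hpow.mul (QZeta.tendsto_tsum_term hq0 hq1 m)
end

section
/- The limit as q → 1⁻ of ζ_q(−1) = (1−q)^{-1}( 1/(q²−1) − 1/(q−1) + 1/(2 log q) ) equals −1/12. -/
open Filter Topology Asymptotics Real Finset

/-!
Put `x = 1 - q`. Clearing denominators,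
`ζ_q(-1) = (q² - 1 - 2q log q) / (2 log q (q² - 1)(1 - q))`.
The Taylor expansion `log q = -(x + x²/2 + x³/3) + o(x³)` makes the numerator `-x³/3 + o(x³)`,
while `log q ~ -x` and `q² - 1 ~ -2x` make the denominator `~ 4x³`; hence the limit `-1/12`.
Dividing both by `x³` turns this into a quotient of two functions with finite nonzero limits.
-/

namespace Real

theorem isLittleO_log_one_sub_add_sum_range (n : ℕ) :
    (fun x : ℝ => log (1 - x) + ∑ i ∈ range n, x ^ (i + 1) / (i + 1)) =o[𝓝 0]
      fun x => x ^ n := by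
  refine IsBigO.trans_isLittleO (g := fun x : ℝ => x ^ (n + 1)) (IsBigO.of_bound 2 ?_)
    (isLittleO_pow_pow n.lt_succ_self)
  filter_upwards [Metric.ball_mem_nhds (0 : ℝ) one_half_pos] with x hx
  rw [Metric.mem_ball, dist_zero_right, norm_eq_abs] at hx
  rw [norm_eq_abs, norm_eq_abs, abs_pow, add_comm]
  calc _ ≤ |x| ^ (n + 1) / (1 - |x|) := abs_log_sub_add_sum_range_le (by linarith) n
    _ ≤ |x| ^ (n + 1) / (1 / 2) := by gcongr; linarith
    _ = 2 * |x| ^ (n + 1) := by ring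

theorem tendsto_log_add_sum_range_div_pow (n : ℕ) :
    Tendsto (fun q : ℝ => (log q + ∑ i ∈ range n, (1 - q) ^ (i + 1) / (i + 1)) / (1 - q) ^ n)
      (𝓝 1) (𝓝 0) := by
  have h : Tendsto (fun q : ℝ => 1 - q) (𝓝 1) (𝓝 0) := by
    simpa using tendsto_const_nhds (x := (1 : ℝ)).sub (tendsto_id (x := 𝓝 (1 : ℝ)))
  simpa [Function.comp_def] using
    (isLittleO_log_one_sub_add_sum_range n).tendsto_div_nhds_zero.comp h

theorem tendsto_log_div_one_sub :
    Tendsto (fun q : ℝ => log q / (1 - q)) (𝓝[≠] 1) (𝓝 (-1)) := by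
  have h := (tendsto_nhdsWithin_of_tendsto_nhds (s := {1}ᶜ)
    (tendsto_log_add_sum_range_div_pow 1)).sub_const 1
  rw [zero_sub] at h
  refine h.congr' ?_
  filter_upwards [self_mem_nhdsWithin] with q hq
  have h1q : 1 - q ≠ 0 := sub_ne_zero.2 (Ne.symm hq)
  simp only [range_one, sum_singleton, zero_add, pow_one, CharP.cast_eq_zero, div_one]
  field_simp
  ring

end Real

noncomputable def qZetaNegOne (q : ℝ) : ℝ :=
  (1 - q)⁻¹ * (1 / (q ^ 2 - 1) - 1 / (q - 1) + 1 / (2 * log q))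

theorem qZetaNegOne_eventuallyEq :
    qZetaNegOne =ᶠ[𝓝[≠] 1] fun q => (1 / 3 + 2 * (1 - q) / 3 +
      2 * q * ((log q + ∑ i ∈ range 3, (1 - q) ^ (i + 1) / (i + 1)) / (1 - q) ^ 3)) /
      (2 * (1 + q) * (log q / (1 - q))) := by
  filter_upwards [self_mem_nhdsWithin,
    eventually_nhdsWithin_of_eventually_nhds (lt_mem_nhds one_pos)] with q h1 h0
  have hq1 : q - 1 ≠ 0 := sub_ne_zero.2 h1
  have h1q : 1 - q ≠ 0 := sub_ne_zero.2 (Ne.symm h1)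
  have hq2 : q ^ 2 - 1 ≠ 0 := by
    rw [show q ^ 2 - 1 = (q - 1) * (q + 1) by ring]
    exact mul_ne_zero hq1 (by positivity)
  have hlog : log q ≠ 0 := log_ne_zero_of_pos_of_ne_one h0 h1
  simp only [qZetaNegOne, sum_range_succ, sum_range_zero]
  field_simp
  ring

theorem tendsto_qZetaNegOne : Tendsto qZetaNegOne (𝓝[≠] 1) (𝓝 (-(1 / 12))) := by
  have hq : Tendsto (fun q : ℝ => q) (𝓝[≠] 1) (𝓝 1) :=
    tendsto_nhdsWithin_of_tendsto_nhds tendsto_id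
  have hR := tendsto_nhdsWithin_of_tendsto_nhds (s := {1}ᶜ) (tendsto_log_add_sum_range_div_pow 3)
  refine Tendsto.congr' qZetaNegOne_eventuallyEq.symm ?_
  rw [show (-(1 / 12) : ℝ) =
    (1 / 3 + 2 * (1 - 1) / 3 + 2 * 1 * 0) / (2 * (1 + 1) * (-1)) by norm_num]
  exact ((tendsto_const_nhds.add
      ((tendsto_const_nhds.mul (tendsto_const_nhds.sub hq)).div_const 3)).add
      ((tendsto_const_nhds.mul hq).mul hR)).div
    ((tendsto_const_nhds.mul (tendsto_const_nhds.add hq)).mul tendsto_log_div_one_sub)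
    (by norm_num)

theorem stmt_6 :
    Filter.Tendsto
      (fun q : ℝ => (1 - q)⁻¹ * (1 / (q ^ 2 - 1) - 1 / (q - 1) + 1 / (2 * Real.log q)))
      (nhdsWithin 1 (Set.Ioo 0 1)) (nhds (-(1 / 12))) :=
  tendsto_qZetaNegOne.mono_left (nhdsWithin_mono _ fun _ hq => hq.2.ne)
end

section
/- For a nonnegative integer m, as q → 1, (m+1) ∑_{r=1}^{m+1} (−1)^r C(m,r−1)/(q^r−1) = −1/log q + B_{m+1}(log q)^m + O((log q)^{m+1}). -/
/-!
Put `x = log q`, so `q ^ r = exp (r x)`, and let `g x = x / (exp x - 1)`. Since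
`(m + 1) C(m, r - 1) = r C(m + 1, r)`, the sum equals
`(∑_{r=0}^{m+1} (-1)^r C(m+1, r) g (r x) - 1) / x`, and the alternating sum is `(-1)^(m+1)` times
the `(m+1)`-st forward difference of `g` with step `x`. For a smooth `f`, the `j`-th derivative
in `h` of `Δ_h^n f (0)` at `h = 0` is `Δ_1^n (r ↦ r^j) (0) f^(j)(0)`, which vanishes for `j < n`
and is `n! f^(n)(0)` for `j = n`; Taylor's theorem then gives
`Δ_h^n f (0) = h^n f^(n)(0) + O(h^(n+1))`. Finally, Leibniz's rule applied to
`g x (exp x - 1) = x` yields the recurrence defining the Bernoulli numbers, so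
`g^(n)(0) = bernoulli n`, and `(-1)^(m+1) bernoulli (m+1) = bernoulli' (m+1)`.
-/

open Asymptotics Filter Finset Topology Set fwdDiff

lemma fwdDiff_iter_zero_eq_sum (f : ℝ → ℝ) (n : ℕ) (h : ℝ) :
    (Δ_[h])^[n] f 0 = ∑ k ∈ range (n + 1), (-1 : ℝ) ^ (n - k) * n.choose k * f (k * h) := by
  simp [fwdDiff_iter_eq_sum_shift, zsmul_eq_mul, nsmul_eq_mul]

lemma iteratedDeriv_fwdDiff_iter_zero {f : ℝ → ℝ} {j : ℕ} (n : ℕ)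
    (hf : ContDiff ℝ j f) :
    iteratedDeriv j (fun h => (Δ_[h])^[n] f 0) 0 =
      (Δ_[1])^[n] (fun r : ℝ => r ^ j) 0 * iteratedDeriv j f 0 := by
  have hdil (c : ℝ) : ContDiff ℝ j fun h => f (c * h) :=
    hf.comp (contDiff_const.mul contDiff_id)
  simp_rw [fwdDiff_iter_zero_eq_sum]
  rw [iteratedDeriv_fun_sum (f := fun k h => (-1 : ℝ) ^ (n - k) * n.choose k * f (k * h))
    fun k _ => (contDiff_const.mul (hdil k)).contDiffAt, sum_mul]
  refine sum_congr rfl fun k _ => ?_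
  rw [iteratedDeriv_const_mul _ (hdil k).contDiffAt, iteratedDeriv_comp_const_mul hf]
  simp only [mul_zero, mul_one]
  ring

lemma fwdDiff_iter_sub_pow_mul_iteratedDeriv_isBigO {f : ℝ → ℝ} {n : ℕ}
    (hf : ContDiff ℝ (n + 1) f) :
    (fun h => (Δ_[h])^[n] f 0 - h ^ n * iteratedDeriv n f 0) =O[𝓝 0] fun h => h ^ (n + 1) := by
  set F := fun h : ℝ => (Δ_[h])^[n] f 0
  have hF : ContDiff ℝ (n + 1) F := by
    simp only [F, fwdDiff_iter_zero_eq_sum]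
    exact ContDiff.sum fun k _ => contDiff_const.mul (hf.comp (contDiff_const.mul contDiff_id))
  obtain ⟨c, htaylor⟩ : ∃ c : ℝ, ∀ h,
      taylorWithinEval F (n + 1) univ 0 h = h ^ n * iteratedDeriv n f 0 + c * h ^ (n + 1) := by
    refine ⟨((n + 1).factorial : ℝ)⁻¹ * iteratedDeriv (n + 1) F 0, fun h => ?_⟩
    rw [taylor_within_apply, sum_range_succ, sum_range_succ, sum_eq_zero fun j hj => ?_]
    · simp only [iteratedDerivWithin_univ, sub_zero, smul_eq_mul]
      rw [iteratedDeriv_fwdDiff_iter_zero n (hf.of_le (by norm_cast; omega)),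
        fwdDiff_iter_eq_factorial, Pi.natCast_apply]
      field_simp
      ring
    · rw [iteratedDerivWithin_univ, iteratedDeriv_fwdDiff_iter_zero n
        (hf.of_le (by norm_cast; have := mem_range.1 hj; omega)),
        fwdDiff_iter_pow_eq_zero_of_lt (mem_range.1 hj)]
      simp
  have hrem := (taylor_isLittleO_univ (x₀ := 0) hF).isBigO
  simp only [sub_zero, htaylor] at hrem
  exact (hrem.add (isBigO_const_mul_self c _ _)).congr_left fun h => by ring

lemma neg_one_pow_mul_fwdDiff_iter_zero (f : ℝ → ℝ) (n : ℕ) (h : ℝ) :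
    (-1) ^ n * (Δ_[h])^[n] f 0 =
      ∑ k ∈ range (n + 1), (-1 : ℝ) ^ k * n.choose k * f (k * h) := by
  rw [fwdDiff_iter_zero_eq_sum, mul_sum]
  refine sum_congr rfl fun k hk => ?_
  have hsign : (-1 : ℝ) ^ n * (-1) ^ (n - k) = (-1) ^ k := by
    rw [← pow_add, show n + (n - k) = k + 2 * (n - k) by have := mem_range.1 hk; omega, pow_add,
      pow_mul, neg_one_sq, one_pow, mul_one]
  rw [← hsign]
  ring

theorem AnalyticOnNhd.dslope {𝕜 E : Type*} [NontriviallyNormedField 𝕜] [NormedAddCommGroup E]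
    [NormedSpace 𝕜 E] {f : 𝕜 → E} {s : Set 𝕜} (hf : AnalyticOnNhd 𝕜 f s) (a : 𝕜) :
    AnalyticOnNhd 𝕜 (dslope f a) s := by
  intro b hb
  rcases eq_or_ne b a with rfl | hba
  · obtain ⟨p, hp⟩ := hf b hb
    exact hp.has_fpower_series_dslope_fslope.analyticAt
  · refine AnalyticAt.congr ?_ (dslope_eventuallyEq_slope_of_ne f hba).symm
    simp only [slope_fun_def]
    exact ((analyticAt_id.sub analyticAt_const).inv (sub_ne_zero.2 hba)).smul
      ((hf b hb).sub analyticAt_const)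

/-- `x / (exp x - 1)`, continued by its limit `1` at `x = 0`. -/
noncomputable def bernoulliGenFun (x : ℝ) : ℝ := (dslope Real.exp 0 x)⁻¹

lemma dslope_exp_zero_of_ne {x : ℝ} (hx : x ≠ 0) :
    dslope Real.exp 0 x = (Real.exp x - 1) / x := by
  rw [dslope_of_ne _ hx, slope_def_field, sub_zero, Real.exp_zero]

lemma dslope_exp_zero_pos (x : ℝ) : 0 < dslope Real.exp 0 x := by
  rcases lt_trichotomy x 0 with hx | rfl | hx
  · rw [dslope_exp_zero_of_ne hx.ne]
    exact div_pos_of_neg_of_neg (by linarith [Real.exp_lt_one_iff.2 hx]) hx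
  · simp [dslope_same]
  · rw [dslope_exp_zero_of_ne hx.ne']
    exact div_pos (by linarith [Real.one_lt_exp_iff.2 hx]) hx

lemma bernoulliGenFun_of_ne_zero {x : ℝ} (hx : x ≠ 0) :
    bernoulliGenFun x = x / (Real.exp x - 1) := by
  rw [bernoulliGenFun, dslope_exp_zero_of_ne hx, inv_div]

lemma bernoulliGenFun_zero : bernoulliGenFun 0 = 1 := by
  simp [bernoulliGenFun, dslope_same]

lemma bernoulliGenFun_mul_exp_sub_one (x : ℝ) : bernoulliGenFun x * (Real.exp x - 1) = x := by
  rcases eq_or_ne x 0 with rfl | hx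
  · simp
  · have : Real.exp x - 1 ≠ 0 := by
      rw [sub_ne_zero, Ne, Real.exp_eq_one_iff]; exact hx
    rw [bernoulliGenFun_of_ne_zero hx, div_mul_cancel₀ _ this]

lemma contDiff_bernoulliGenFun {n : WithTop ℕ∞} : ContDiff ℝ n bernoulliGenFun :=
  ((analyticOnNhd_rexp.dslope 0).contDiff).inv fun x => (dslope_exp_zero_pos x).ne'

lemma iteratedDeriv_exp_sub_one_zero (k : ℕ) :
    iteratedDeriv k (fun x => Real.exp x - 1) 0 = if k = 0 then 0 else 1 := by
  cases k with
  | zero => simp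
  | succ k =>
    have : deriv (fun x => Real.exp x - 1) = Real.exp := by
      funext x; simp
    simp [iteratedDeriv_succ', this, iteratedDeriv_eq_iterate, Real.iter_deriv_exp]

lemma sum_choose_mul_iteratedDeriv_bernoulliGenFun (n : ℕ) :
    ∑ i ∈ range (n + 1), ((n + 1).choose i : ℝ) * iteratedDeriv i bernoulliGenFun 0 =
      if n = 0 then 1 else 0 := by
  have hprod := iteratedDeriv_fun_mul (n := n + 1) (x := (0 : ℝ)) (g := fun x => Real.exp x - 1)
    contDiff_bernoulliGenFun.contDiffAt ((Real.contDiff_exp.sub contDiff_const).contDiffAt)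
  simp only [bernoulliGenFun_mul_exp_sub_one, iteratedDeriv_fun_id_zero,
    iteratedDeriv_exp_sub_one_zero, sum_range_succ _ (n + 1), Nat.sub_self, if_true, mul_zero,
    add_zero, Nat.add_eq_right] at hprod
  rw [hprod]
  refine sum_congr rfl fun i hi => ?_
  rw [if_neg (by have := mem_range.1 hi; omega), mul_one]

lemma iteratedDeriv_bernoulliGenFun_zero (n : ℕ) :
    iteratedDeriv n bernoulliGenFun 0 = bernoulli n := by
  induction n using Nat.strong_induction_on with
  | _ n ih =>
    have hB : ∑ i ∈ range (n + 1), ((n + 1).choose i : ℝ) * (bernoulli i : ℝ) =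
        if n = 0 then 1 else 0 := by
      have := congrArg (fun q : ℚ => (q : ℝ)) (sum_bernoulli (n + 1))
      simpa only [Nat.add_eq_right, Rat.cast_sum, Rat.cast_mul, Rat.cast_natCast, apply_ite,
        Rat.cast_one, Rat.cast_zero] using this
    have h := (sum_choose_mul_iteratedDeriv_bernoulliGenFun n).trans hB.symm
    rw [sum_range_succ, sum_range_succ, sum_congr rfl fun i hi => by rw [ih i (mem_range.1 hi)],
      add_right_inj, Nat.choose_succ_self_right] at h
    exact mul_left_cancel₀ (by positivity) h

lemma add_one_mul_choose_div_exp_pow_sub_one (m k : ℕ) {x : ℝ} (hx : x ≠ 0) :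
    (m + 1) * m.choose k / (Real.exp x ^ (k + 1) - 1) =
      (m + 1).choose (k + 1) * bernoulliGenFun ((k + 1 : ℕ) * x) / x := by
  have hkx : ((k + 1 : ℕ) : ℝ) * x ≠ 0 := mul_ne_zero (by positivity) hx
  have hchoose : (m + 1 : ℝ) * m.choose k = (m + 1).choose (k + 1) * (k + 1 : ℕ) := by
    exact_mod_cast Nat.add_one_mul_choose_eq m k
  rw [bernoulliGenFun_of_ne_zero hkx, Real.exp_nat_mul, hchoose]
  field_simp

lemma add_one_mul_sum_div_exp_pow_sub_one (m : ℕ) {x : ℝ} (hx : x ≠ 0) :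
    (m + 1) * ∑ r ∈ Icc 1 (m + 1), (-1 : ℝ) ^ r * m.choose (r - 1) / (Real.exp x ^ r - 1) =
      ((-1) ^ (m + 1) * (Δ_[x])^[m + 1] bernoulliGenFun 0 - 1) / x := by
  rw [neg_one_pow_mul_fwdDiff_iter_zero, sum_range_succ', ← Finset.Ico_add_one_right_eq_Icc,
    sum_Ico_eq_sum_range, mul_sum, Nat.add_sub_cancel, add_sub_assoc, add_div, sum_div]
  simp only [CharP.cast_eq_zero, zero_mul, bernoulliGenFun_zero, pow_zero, Nat.choose_zero_right,
    Nat.cast_one, mul_one, sub_self, zero_div, add_zero]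
  refine sum_congr rfl fun k _ => ?_
  rw [add_comm 1 k, Nat.add_sub_cancel, mul_div_assoc, mul_assoc, mul_div_assoc,
    ← add_one_mul_choose_div_exp_pow_sub_one m k hx]
  ring

lemma isBigO_sum_div_exp_pow_sub_one (m : ℕ) :
    (fun x : ℝ =>
        (m + 1) * ∑ r ∈ Icc 1 (m + 1), (-1 : ℝ) ^ r * m.choose (r - 1) / (Real.exp x ^ r - 1)
          - (-1 / x + (bernoulli' (m + 1) : ℝ) * x ^ m))
      =O[𝓝[≠] 0] fun x => x ^ (m + 1) := by
  have hΔ := fwdDiff_iter_sub_pow_mul_iteratedDeriv_isBigO (n := m + 1) contDiff_bernoulliGenFun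
  rw [iteratedDeriv_bernoulliGenFun_zero] at hΔ
  refine (((hΔ.mono nhdsWithin_le_nhds).const_mul_left ((-1) ^ (m + 1))).mul
    (isBigO_refl (fun x : ℝ => x⁻¹) _)).congr' ?_ ?_
  · filter_upwards [self_mem_nhdsWithin] with x (hx : x ≠ 0)
    rw [add_one_mul_sum_div_exp_pow_sub_one m hx, bernoulli'_eq_bernoulli]
    push_cast
    field_simp
    ring
  · filter_upwards [self_mem_nhdsWithin] with x (hx : x ≠ 0)
    field_simp
    ring

theorem stmt_9 (m : ℕ) :
    (fun q : ℝ =>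
        ((m : ℝ) + 1) *
            ∑ r ∈ Finset.Icc 1 (m + 1), (-1 : ℝ) ^ r * (m.choose (r - 1) : ℝ) / (q ^ r - 1)
          - (-1 / Real.log q + ((bernoulli' (m + 1) : ℚ) : ℝ) * Real.log q ^ m))
      =O[nhdsWithin 1 (Set.Ioo 0 1)] fun q : ℝ => Real.log q ^ (m + 1) := by
  have hlog : Tendsto Real.log (𝓝[Ioo 0 1] 1) (𝓝[≠] 0) := by
    refine tendsto_nhdsWithin_of_tendsto_nhds_of_eventually_within _ ?_ ?_
    · simpa using (Real.continuousAt_log one_ne_zero).tendsto.mono_left nhdsWithin_le_nhds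
    · filter_upwards [self_mem_nhdsWithin] with q hq
      exact (Real.log_neg hq.1 hq.2).ne
  refine ((isBigO_sum_div_exp_pow_sub_one m).comp_tendsto hlog).congr' ?_ (.refl _ _)
  filter_upwards [self_mem_nhdsWithin] with q hq
  simp only [Function.comp_apply, Real.exp_log hq.1]
end

section
/- Define B_m(q) = (q−1)^{-m+1} ∑_{r=0}^m (−1)^r C(m,r) r/(q^r−1) for m ≥ 1 (with the r = 0 term read as 1/log q) and B_0(q) = (q−1)/log q. Then for all n ≥ 0, ∑_{m=0}^n (−1)^m C(n,m) q^m B_m(q) = (−1)^n B_n(q) + δ_{1n}, where δ_{1n} = 1 if n = 1 and 0 otherwise. -/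
/-!
Write `B_m(q) = (q-1)^{1-m} T_m`, where `T` is the binomial transform of `w(r) = r/(q^r-1)`,
`w(0) = 1/log q`. After expanding `T_m` and swapping the sums, the binomial theorem gives
`∑_m C(n,m) C(m,r) (-q)^m (q-1)^{n-m} = C(n,r) (-q)^r (-1)^{n-r}`, so the left side equals
`(q-1)^{1-n} (-1)^n ∑_r (-1)^r C(n,r) q^r w(r)`. Since `q^r w(r) = w(r) + r`, this is
`(-1)^n B_n(q)` plus `(-1)^n ∑_r (-1)^r C(n,r) r = δ_{1n}`.
-/

open Finset

/-- The `q`-Bernoulli numbers: `B_0(q) = (q-1)/log q` and, for `m ≥ 1`,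
`B_m(q) = (q-1)^{1-m} (∑_{r=1}^m (-1)^r C(m,r) r/(q^r-1) + 1/log q)`. -/
noncomputable def qBern (q : ℝ) (m : ℕ) : ℝ :=
  if m = 0 then (q - 1) / Real.log q
  else (q - 1) ^ (1 - (m : ℤ)) *
    (∑ r ∈ Finset.Icc 1 m, (-1 : ℝ) ^ r * (m.choose r : ℝ) * r / (q ^ r - 1) + 1 / Real.log q)

section CommSemiring

variable {R : Type*} [CommSemiring R]

theorem sum_choose_mul_choose_mul_pow_mul_pow (x y : R) (n r : ℕ) :
    ∑ m ∈ range (n + 1), (n.choose m * m.choose r : R) * x ^ m * y ^ (n - m)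
      = n.choose r * x ^ r * (x + y) ^ (n - r) := by
  have hvanish : ∀ m < r, (n.choose m * m.choose r : R) * x ^ m * y ^ (n - m) = 0 := fun m hm => by
    simp [Nat.choose_eq_zero_of_lt hm]
  rcases lt_or_ge n r with hnr | hrn
  · rw [Nat.choose_eq_zero_of_lt hnr, Nat.cast_zero, zero_mul, zero_mul]
    exact sum_eq_zero fun m hm => hvanish m (by rw [mem_range] at hm; omega)
  obtain ⟨N, rfl⟩ := Nat.exists_eq_add_of_le hrn
  rw [add_assoc, sum_range_add, sum_eq_zero fun m hm => hvanish m (mem_range.mp hm), zero_add,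
    Nat.add_sub_cancel_left, add_pow, mul_sum]
  refine sum_congr rfl fun k _ => ?_
  rw [← Nat.cast_mul, Nat.choose_mul (Nat.le_add_right r k), Nat.add_sub_cancel_left,
    Nat.add_sub_cancel_left, Nat.add_sub_add_left, Nat.cast_mul, pow_add]
  ring

end CommSemiring

section CommRing

variable {R : Type*} [CommRing R]

theorem sum_range_neg_one_pow_mul_choose_mul (n : ℕ) :
    ∑ r ∈ range (n + 1), (-1 : R) ^ r * n.choose r * r = if n = 1 then -1 else 0 := by
  cases n with
  | zero => simp
  | succ N =>
    have hterm : ∀ s, (-1 : R) ^ (s + 1) * ((N + 1).choose (s + 1) : ℕ) * ((s + 1 : ℕ) : R)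
        = -(N + 1) * ((-1) ^ s * N.choose s) := fun s => by
      have h := congrArg (Nat.cast (R := R)) (Nat.add_one_mul_choose_eq N s)
      push_cast at h ⊢
      linear_combination (-1 : R) ^ s * h
    have halt : ∑ s ∈ range (N + 1), (-1 : R) ^ s * N.choose s = if N = 0 then 1 else 0 := by
      exact_mod_cast congrArg (Int.cast (R := R)) (Int.alternating_sum_range_choose (n := N))
    rw [sum_range_succ', sum_congr rfl fun s _ => hterm s, ← mul_sum, halt]
    rcases eq_or_ne N 0 with rfl | hN
    · simp
    · simp [hN]

def binomialTransform (g : ℕ → R) (m : ℕ) : R :=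
  ∑ r ∈ range (m + 1), (-1) ^ r * m.choose r * g r

theorem binomialTransform_eq_sum_range (g : ℕ → R) {m N : ℕ} (hmN : m ≤ N) :
    binomialTransform g m = ∑ r ∈ range (N + 1), (-1) ^ r * m.choose r * g r := by
  refine sum_subset (range_subset_range.mpr (by omega)) fun r _ hr => ?_
  rw [Nat.choose_eq_zero_of_lt (by rw [mem_range] at hr; omega)]
  simp

theorem sum_range_choose_mul_pow_mul_binomialTransform (q : R) (g : ℕ → R) (n : ℕ) :
    ∑ m ∈ range (n + 1), (-1) ^ m * n.choose m * q ^ m * (q - 1) ^ (n - m) * binomialTransform g m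
      = (-1) ^ n * ∑ r ∈ range (n + 1), (-1) ^ r * n.choose r * q ^ r * g r := by
  calc _ = ∑ m ∈ range (n + 1), ∑ r ∈ range (n + 1), (-1) ^ r * g r *
          ((n.choose m * m.choose r : R) * (-q) ^ m * (q - 1) ^ (n - m)) := by
        refine sum_congr rfl fun m hm => ?_
        rw [binomialTransform_eq_sum_range g (Nat.lt_succ_iff.mp (mem_range.mp hm)), mul_sum]
        refine sum_congr rfl fun r _ => ?_
        rw [neg_pow]
        ring
    _ = ∑ r ∈ range (n + 1), (-1) ^ r * g r * (n.choose r * (-q) ^ r * (-1) ^ (n - r)) := by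
        rw [sum_comm]
        refine sum_congr rfl fun r _ => ?_
        rw [← mul_sum, sum_choose_mul_choose_mul_pow_mul_pow,
          show -q + (q - 1) = -1 by ring]
    _ = _ := by
        rw [mul_sum]
        refine sum_congr rfl fun r hr => ?_
        rw [neg_pow, ← pow_sub_mul_pow (-1 : R) (Nat.lt_succ_iff.mp (mem_range.mp hr))]
        ring

end CommRing

noncomputable def qBernWeight (q : ℝ) (r : ℕ) : ℝ :=
  if r = 0 then 1 / Real.log q else r / (q ^ r - 1)

theorem qBern_eq_zpow_mul_binomialTransform (q : ℝ) (m : ℕ) :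
    qBern q m = (q - 1) ^ (1 - (m : ℤ)) * binomialTransform (qBernWeight q) m := by
  rcases eq_or_ne m 0 with rfl | hm
  · simp [qBern, qBernWeight, binomialTransform, div_eq_mul_inv]
  rw [qBern, if_neg hm, binomialTransform, sum_range_eq_add_Ico _ (by omega : 0 < m + 1),
    Finset.Ico_add_one_right_eq_Icc, add_comm (_ * _)]
  congr 2
  · refine sum_congr rfl fun r hr => ?_
    rw [qBernWeight, if_neg (by rw [mem_Icc] at hr; omega), mul_div_assoc]
  · simp [qBernWeight]

theorem pow_mul_qBernWeight {q : ℝ} (hq0 : 0 ≤ q) (hq1 : q ≠ 1) (r : ℕ) :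
    q ^ r * qBernWeight q r = qBernWeight q r + r := by
  rcases eq_or_ne r 0 with rfl | hr
  · simp
  have hqr : q ^ r - 1 ≠ 0 := sub_ne_zero.mpr fun h => hq1 ((pow_eq_one_iff_of_nonneg hq0 hr).mp h)
  rw [qBernWeight, if_neg hr]
  field_simp
  ring

theorem stmt_10 (q : ℝ) (hq0 : 0 < q) (hq1 : q < 1) (n : ℕ) :
    ∑ m ∈ Finset.range (n + 1), (-1 : ℝ) ^ m * (n.choose m : ℝ) * q ^ m * qBern q m
      = (-1 : ℝ) ^ n * qBern q n + (if n = 1 then 1 else 0) := by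
  have hq : q - 1 ≠ 0 := by linarith
  have hscale : ∀ m ≤ n, (q - 1) ^ (1 - (m : ℤ)) = (q - 1) ^ (1 - (n : ℤ)) * (q - 1) ^ (n - m) :=
    fun m hm => by
      rw [← zpow_natCast, ← zpow_add₀ hq, Nat.cast_sub hm]
      ring_nf
  calc _ = (q - 1) ^ (1 - (n : ℤ)) * ∑ m ∈ range (n + 1),
          (-1) ^ m * n.choose m * q ^ m * (q - 1) ^ (n - m) * binomialTransform (qBernWeight q) m := by
        rw [mul_sum]
        refine sum_congr rfl fun m hm => ?_
        rw [qBern_eq_zpow_mul_binomialTransform, hscale m (Nat.lt_succ_iff.mp (mem_range.mp hm))]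
        ring
    _ = (q - 1) ^ (1 - (n : ℤ)) * ((-1) ^ n * (binomialTransform (qBernWeight q) n
          + ∑ r ∈ range (n + 1), (-1 : ℝ) ^ r * n.choose r * r)) := by
        rw [sum_range_choose_mul_pow_mul_binomialTransform, binomialTransform, ← sum_add_distrib]
        congr 2
        refine sum_congr rfl fun r _ => ?_
        rw [mul_assoc _ (q ^ r), pow_mul_qBernWeight hq0.le hq1.ne]
        ring
    _ = _ := by
        rw [sum_range_neg_one_pow_mul_choose_mul, qBern_eq_zpow_mul_binomialTransform]
        split_ifs with hn
        · subst hn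
          simp only [Nat.cast_one, sub_self, zpow_zero]
          ring
        · ring
end

section
/- For every integer k ≥ 2, lim_{q→1⁻} (1−q)^k ∑_{n=1}^∞ n^{k−1} q^n/(1−q^n) = (k−1)! ζ(k). -/
open Filter Finset

lemma lem_basis (K : ℕ) : ∃ e : ℕ → ℝ, e K = K.factorial ∧ (∀ j, K < j → e j = 0) ∧
    ∀ n : ℕ, ((n : ℝ) + 1) ^ K = ∑ j ∈ Finset.range (K + 1), e j * ((n + j).choose j : ℝ) := by
  induction K with
  | zero =>
    refine ⟨fun j => if j = 0 then 1 else 0, by simp, fun j hj => by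
      simp [Nat.pos_iff_ne_zero.mp hj], fun n => by simp⟩
  | succ K ih =>
    obtain ⟨e, heK, hez, hrep⟩ := ih
    refine ⟨fun j => (if j = 0 then 0 else e (j - 1) * (j : ℝ)) - e j * (j : ℝ), ?_, ?_, ?_⟩
    · have h1 : e (K + 1) = 0 := hez (K + 1) (by omega)
      simp only [Nat.add_sub_cancel, h1, heK]
      push_cast [Nat.factorial_succ]
      ring
    · intro j hj
      have h1 : e j = 0 := hez j (by omega)
      have h2 : e (j - 1) = 0 := hez (j - 1) (by omega)
      simp [h1, h2]
    · intro n
      have key : ∀ j : ℕ, ((n : ℝ) + 1) * ((n + j).choose j : ℝ)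
          = ((j : ℝ) + 1) * (((n + j + 1).choose (j + 1) : ℕ) : ℝ) - (j : ℝ) * ((n + j).choose j : ℝ) := by
        intro j
        have h := Nat.add_one_mul_choose_eq (n + j) j
        have h' : ((n + j + 1 : ℕ) : ℝ) * ((n + j).choose j : ℝ)
            = (((n + j + 1).choose (j + 1) : ℕ) : ℝ) * ((j : ℝ) + 1) := by
          exact_mod_cast congrArg (Nat.cast (R := ℝ)) h
        push_cast at h' ⊢
        linarith [h']
      have step1 : ((n : ℝ) + 1) ^ (K + 1)
          = ∑ j ∈ Finset.range (K + 1),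
              (e j * ((j : ℝ) + 1) * (((n + j + 1).choose (j + 1) : ℕ) : ℝ)
                - e j * (j : ℝ) * ((n + j).choose j : ℝ)) := by
        rw [pow_succ, hrep, Finset.sum_mul]
        refine Finset.sum_congr rfl fun j _ => ?_
        linear_combination e j * key j
      have hA : ∑ j ∈ Finset.range (K + 1), e j * ((j : ℝ) + 1) * (((n + j + 1).choose (j + 1) : ℕ) : ℝ)
          = ∑ j ∈ Finset.range (K + 1 + 1), (if j = 0 then 0 else e (j - 1) * (j : ℝ)) * ((n + j).choose j : ℝ) := by
        have hsr := Finset.sum_range_succ' (fun j => (if j = 0 then 0 else e (j - 1) * (j : ℝ)) * ((n + j).choose j : ℝ)) (K + 1)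
        rw [hsr]
        simp only [Nat.succ_ne_zero, if_false, reduceIte, Nat.add_sub_cancel, zero_mul, add_zero]
        refine Finset.sum_congr rfl fun j _ => ?_
        have hh : n + (j + 1) = n + j + 1 := by omega
        rw [hh]
        push_cast
        ring
      have hB : ∑ j ∈ Finset.range (K + 1), e j * (j : ℝ) * ((n + j).choose j : ℝ)
          = ∑ j ∈ Finset.range (K + 1 + 1), e j * (j : ℝ) * ((n + j).choose j : ℝ) := by
        rw [Finset.sum_range_succ (fun j => e j * (j : ℝ) * ((n + j).choose j : ℝ)) (K + 1),
          hez (K + 1) (by omega)]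
        simp
      show ((n : ℝ) + 1) ^ (K + 1) = ∑ j ∈ Finset.range (K + 1 + 1),
          ((if j = 0 then 0 else e (j - 1) * (j : ℝ)) - e j * (j : ℝ)) * ((n + j).choose j : ℝ)
      rw [step1, Finset.sum_sub_distrib, hA, hB, ← Finset.sum_sub_distrib]
      exact Finset.sum_congr rfl fun j _ => by ring


lemma lem_hasSum (K : ℕ) (e : ℕ → ℝ)
    (hrep : ∀ n : ℕ, ((n : ℝ) + 1) ^ K = ∑ j ∈ Finset.range (K + 1), e j * ((n + j).choose j : ℝ))
    {x : ℝ} (hx : x ∈ Set.Ioo (0 : ℝ) 1) :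
    HasSum (fun n : ℕ => ((n : ℝ) + 1) ^ K * x ^ (n + 1))
      (x * ∑ j ∈ Finset.range (K + 1), e j * (1 / (1 - x) ^ (j + 1))) := by
  have hx' : ‖x‖ < 1 := by rw [Real.norm_eq_abs, abs_lt]; constructor <;> [linarith [hx.1]; exact hx.2]
  have h1 : ∀ j ∈ Finset.range (K + 1),
      HasSum (fun n : ℕ => e j * (((n + j).choose j : ℝ) * x ^ n)) (e j * (1 / (1 - x) ^ (j + 1))) :=
    fun j _ => (hasSum_choose_mul_geometric_of_norm_lt_one j hx').mul_left (e j)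
  have h2 := hasSum_sum h1
  have h3 : (fun n : ℕ => ∑ j ∈ Finset.range (K + 1), e j * (((n + j).choose j : ℝ) * x ^ n))
      = fun n : ℕ => ((n : ℝ) + 1) ^ K * x ^ n := by
    funext n
    rw [hrep n, Finset.sum_mul]
    exact Finset.sum_congr rfl fun j _ => by ring
  rw [h3] at h2
  have h4 := h2.mul_left x
  have h5 : (fun n : ℕ => x * (((n : ℝ) + 1) ^ K * x ^ n))
      = fun n : ℕ => ((n : ℝ) + 1) ^ K * x ^ (n + 1) := by
    funext n; ring
  rwa [h5] at h4

lemma lem_exp_bound (k : ℕ) (hk : 1 ≤ k) (u : ℝ) (hu : 0 ≤ u) :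
    u ^ k * Real.exp (-u) ≤ (k : ℝ) ^ k := by
  have hk0 : (0 : ℝ) < k := by exact_mod_cast hk
  have h1 : u / k ≤ Real.exp (u / k) := (Real.add_one_le_exp _).trans' (by linarith [div_nonneg hu hk0.le])
  have h2 : u ≤ k * Real.exp (u / k) := by
    have := mul_le_mul_of_nonneg_left h1 hk0.le
    rwa [mul_div_cancel₀ _ hk0.ne'] at this
  have h3 : u ^ k ≤ (k * Real.exp (u / k)) ^ k := pow_le_pow_left₀ hu h2 k
  have h4 : (k * Real.exp (u / k)) ^ k = (k : ℝ) ^ k * Real.exp u := by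
    rw [mul_pow, ← Real.exp_nat_mul]
    congr 2
    field_simp
  calc u ^ k * Real.exp (-u) ≤ ((k : ℝ) ^ k * Real.exp u) * Real.exp (-u) := by
        apply mul_le_mul_of_nonneg_right (h3.trans_eq h4) (Real.exp_nonneg _)
    _ = (k : ℝ) ^ k := by rw [mul_assoc, ← Real.exp_add, add_neg_cancel, Real.exp_zero, mul_one]

set_option maxHeartbeats 1000000 in
theorem stmt_12 (k : ℕ) (hk : 2 ≤ k) :
    Filter.Tendsto (fun q : ℝ => (1 - q) ^ k *
        ∑' n : ℕ, ((n : ℝ) + 1) ^ (k - 1) * q ^ (n + 1) / (1 - q ^ (n + 1)))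
      (nhdsWithin 1 (Set.Ioo 0 1))
      (nhds (((k - 1).factorial : ℝ) * ∑' n : ℕ, 1 / ((n : ℝ) + 1) ^ k)) := by
  obtain ⟨e, heK, hez, hrep⟩ := lem_basis (k - 1)
  have hk1 : k - 1 + 1 = k := by omega
  have hrep' : ∀ n : ℕ, ((n : ℝ) + 1) ^ (k - 1)
      = ∑ j ∈ Finset.range k, e j * ((n + j).choose j : ℝ) := by
    intro n; rw [← hk1]; exact hrep n
  obtain ⟨C, hCdef⟩ : ∃ x : ℝ, x = ∑ j ∈ Finset.range k, |e j| := ⟨_, rfl⟩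
  have hC0 : 0 ≤ C := hCdef ▸ Finset.sum_nonneg fun _ _ => abs_nonneg _
  obtain ⟨A, hAdef⟩ : ∃ x : ℝ, x = 2 ^ k * C * ((k : ℝ) ^ k + 1) := ⟨_, rfl⟩
  obtain ⟨B, hBdef⟩ : ∃ x : ℕ → ℝ, x = fun m : ℕ => A * (1 / ((m : ℝ) + 1) ^ k) := ⟨_, rfl⟩
  obtain ⟨φ, hφdef⟩ : ∃ x : ℕ → ℝ → ℝ, x = fun m q =>
    ((∑ i ∈ Finset.range (m + 1), q ^ i)⁻¹) ^ k *
      (q ^ (m + 1) * ∑ j ∈ Finset.range k, e j * (1 - q ^ (m + 1)) ^ (k - 1 - j)) := ⟨_, rfl⟩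
  -- limits of each term
  have hlim : ∀ m : ℕ, Tendsto (fun q : ℝ => φ m q) (nhdsWithin 1 (Set.Ioo 0 1))
      (nhds (((k - 1).factorial : ℝ) * (1 / ((m : ℝ) + 1) ^ k))) := by
    intro m
    have hcS : Continuous fun q : ℝ => ∑ i ∈ Finset.range (m + 1), q ^ i :=
      continuous_finset_sum _ fun i _ => continuous_pow i
    have hcI : Continuous fun q : ℝ =>
        q ^ (m + 1) * ∑ j ∈ Finset.range k, e j * (1 - q ^ (m + 1)) ^ (k - 1 - j) :=
      (continuous_pow (m + 1)).mul (continuous_finset_sum _ fun j _ =>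
        continuous_const.mul ((continuous_const.sub (continuous_pow (m + 1))).pow _))
    have hne : (∑ i ∈ Finset.range (m + 1), (1 : ℝ) ^ i) ≠ 0 := by
      simp only [one_pow, Finset.sum_const, Finset.card_range, smul_eq_mul, mul_one]
      positivity
    have hca : ContinuousAt (fun q : ℝ => φ m q) 1 := by
      simp only [hφdef]
      exact ((hcS.continuousAt.inv₀ hne).pow k).mul hcI.continuousAt
    have ht : Filter.Tendsto (fun q : ℝ => φ m q) (nhdsWithin 1 (Set.Ioo 0 1)) (nhds (φ m 1)) :=
      hca.tendsto.mono_left nhdsWithin_le_nhds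
    have hval : φ m 1 = ((k - 1).factorial : ℝ) * (1 / ((m : ℝ) + 1) ^ k) := by
      have hsum0 : ∑ j ∈ Finset.range k, e j * (0 : ℝ) ^ (k - 1 - j) = e (k - 1) := by
        rw [Finset.sum_eq_single (k - 1)]
        · rw [Nat.sub_self, pow_zero, mul_one]
        · intro j hj hjne
          rw [zero_pow (by have := Finset.mem_range.mp hj; omega : k - 1 - j ≠ 0), mul_zero]
        · intro h; exact absurd (Finset.mem_range.mpr (by omega)) h
      simp only [hφdef, one_pow, Finset.sum_const, Finset.card_range, smul_eq_mul, mul_one,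
        sub_self, hsum0, heK, one_mul]
      push_cast
      rw [inv_pow, one_div]
      ring
    rw [hval] at ht
    exact ht
  -- uniform bound
  have hbound : ∀ q ∈ Set.Ioo (0 : ℝ) 1, ∀ m : ℕ, |φ m q| ≤ B m := by
    rintro q ⟨hq0, hq1⟩ m
    have hx0 : (0 : ℝ) < q ^ (m + 1) := pow_pos hq0 _
    have hx1 : q ^ (m + 1) < 1 := pow_lt_one₀ hq0.le hq1 (Nat.succ_ne_zero m)
    have hSq : (∑ i ∈ Finset.range (m + 1), q ^ i) * (1 - q) = 1 - q ^ (m + 1) := by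
      linear_combination -(geom_sum_mul q (m + 1))
    have hSpos : (0 : ℝ) < ∑ i ∈ Finset.range (m + 1), q ^ i :=
      Finset.sum_pos (fun i _ => pow_pos hq0 i) Finset.nonempty_range_add_one
    have hM : (0 : ℝ) < (m : ℝ) + 1 := by positivity
    have hinner : |q ^ (m + 1) * ∑ j ∈ Finset.range k, e j * (1 - q ^ (m + 1)) ^ (k - 1 - j)|
        ≤ q ^ (m + 1) * C := by
      rw [abs_mul, abs_of_pos hx0]
      refine mul_le_mul_of_nonneg_left ?_ hx0.le
      calc |∑ j ∈ Finset.range k, e j * (1 - q ^ (m + 1)) ^ (k - 1 - j)|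
          ≤ ∑ j ∈ Finset.range k, |e j * (1 - q ^ (m + 1)) ^ (k - 1 - j)| :=
            Finset.abs_sum_le_sum_abs _ _
        _ ≤ C := by
            rw [hCdef]
            refine Finset.sum_le_sum fun j _ => ?_
            rw [abs_mul]
            nth_rewrite 2 [← mul_one |e j|]
            refine mul_le_mul_of_nonneg_left ?_ (abs_nonneg _)
            rw [abs_of_nonneg (pow_nonneg (by linarith) _)]
            exact pow_le_one₀ (by linarith) (by linarith)
    have habs : |φ m q| ≤ ((∑ i ∈ Finset.range (m + 1), q ^ i)⁻¹) ^ k * (q ^ (m + 1) * C) := by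
      simp only [hφdef]
      rw [abs_mul, abs_pow, abs_of_pos (inv_pos.mpr hSpos)]
      exact mul_le_mul_of_nonneg_left hinner (by positivity)
    refine habs.trans ?_
    rcases le_or_gt (1 / 2 : ℝ) (q ^ (m + 1)) with hhalf | hhalf
    · -- q^(m+1) ≥ 1/2
      have hSx : ((m : ℝ) + 1) * q ^ (m + 1) ≤ ∑ i ∈ Finset.range (m + 1), q ^ i := by
        have hle : ∀ i ∈ Finset.range (m + 1), q ^ (m + 1) ≤ q ^ i := fun i hi =>
          pow_le_pow_of_le_one hq0.le hq1.le (by have := Finset.mem_range.mp hi; omega)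
        calc ((m : ℝ) + 1) * q ^ (m + 1) = ∑ _i ∈ Finset.range (m + 1), q ^ (m + 1) := by
              rw [Finset.sum_const, Finset.card_range, nsmul_eq_mul]; push_cast; ring
          _ ≤ _ := Finset.sum_le_sum hle
      have hSinv : (∑ i ∈ Finset.range (m + 1), q ^ i)⁻¹ ≤ 2 / ((m : ℝ) + 1) := by
        have h2 : ((m : ℝ) + 1) / 2 ≤ ∑ i ∈ Finset.range (m + 1), q ^ i :=
          le_trans (by nlinarith) hSx
        have h3 : 1 / (∑ i ∈ Finset.range (m + 1), q ^ i) ≤ 1 / (((m : ℝ) + 1) / 2) :=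
          one_div_le_one_div_of_le (by positivity) h2
        rw [one_div_div] at h3
        rwa [inv_eq_one_div]
      have hstep : ((∑ i ∈ Finset.range (m + 1), q ^ i)⁻¹) ^ k * (q ^ (m + 1) * C)
          ≤ (2 / ((m : ℝ) + 1)) ^ k * (1 * C) := by
        refine mul_le_mul (pow_le_pow_left₀ (by positivity) hSinv k) ?_ (by positivity) (by positivity)
        exact mul_le_mul_of_nonneg_right (by linarith) hC0
      refine hstep.trans ?_
      rw [hBdef, hAdef]
      have hkk : (0:ℝ) ≤ (k:ℝ)^k := by positivity
      rw [div_pow, one_mul]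
      calc 2 ^ k / ((m : ℝ) + 1) ^ k * C = (2 ^ k * C) * (1 / ((m : ℝ) + 1) ^ k) := by ring
        _ ≤ (2 ^ k * C * ((k : ℝ) ^ k + 1)) * (1 / ((m : ℝ) + 1) ^ k) := by
            refine mul_le_mul_of_nonneg_right ?_ (by positivity)
            nlinarith [mul_nonneg (pow_nonneg (by norm_num : (0:ℝ) ≤ 2) k) hC0,
              mul_nonneg (mul_nonneg (pow_nonneg (by norm_num : (0:ℝ) ≤ 2) k) hC0)
                (by positivity : (0:ℝ) ≤ (k:ℝ)^k)]
    · -- q^(m+1) < 1/2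
      have h1x : (1 : ℝ) / 2 ≤ 1 - q ^ (m + 1) := by linarith
      have hq1' : (0:ℝ) < 1 - q := by linarith
      have hSinv2 : (∑ i ∈ Finset.range (m + 1), q ^ i)⁻¹ ≤ 2 * (1 - q) := by
        have hSval : (∑ i ∈ Finset.range (m + 1), q ^ i) = (1 - q ^ (m + 1)) / (1 - q) := by
          rw [eq_div_iff hq1'.ne']; exact hSq
        rw [hSval, inv_div]
        rw [div_le_iff₀ (by linarith)]
        nlinarith
      have hexp : (1 - q) ^ k * q ^ (m + 1) ≤ (k : ℝ) ^ k / ((m : ℝ) + 1) ^ k := by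
        have e1 : q ≤ Real.exp (-(1 - q)) := by linarith [Real.add_one_le_exp (-(1 - q))]
        have e2 : q ^ (m + 1) ≤ Real.exp (-(((m : ℝ) + 1) * (1 - q))) := by
          calc q ^ (m + 1) ≤ (Real.exp (-(1 - q))) ^ (m + 1) := pow_le_pow_left₀ hq0.le e1 _
            _ = Real.exp (-(((m : ℝ) + 1) * (1 - q))) := by
                rw [← Real.exp_nat_mul]; congr 1; push_cast; ring
        have e3 := lem_exp_bound k (by omega) (((m : ℝ) + 1) * (1 - q)) (by nlinarith)
        rw [le_div_iff₀ (by positivity : (0:ℝ) < ((m : ℝ) + 1) ^ k)]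
        calc (1 - q) ^ k * q ^ (m + 1) * ((m : ℝ) + 1) ^ k
            ≤ (1 - q) ^ k * Real.exp (-(((m : ℝ) + 1) * (1 - q))) * ((m : ℝ) + 1) ^ k := by
              refine mul_le_mul_of_nonneg_right (mul_le_mul_of_nonneg_left e2 (by positivity)) (by positivity)
          _ = (((m : ℝ) + 1) * (1 - q)) ^ k * Real.exp (-(((m : ℝ) + 1) * (1 - q))) := by
              rw [mul_pow]; ring
          _ ≤ (k : ℝ) ^ k := e3
      calc ((∑ i ∈ Finset.range (m + 1), q ^ i)⁻¹) ^ k * (q ^ (m + 1) * C)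
          ≤ (2 * (1 - q)) ^ k * (q ^ (m + 1) * C) :=
            mul_le_mul_of_nonneg_right (pow_le_pow_left₀ (by positivity) hSinv2 k) (by positivity)
        _ = 2 ^ k * ((1 - q) ^ k * q ^ (m + 1)) * C := by rw [mul_pow]; ring
        _ ≤ 2 ^ k * ((k : ℝ) ^ k / ((m : ℝ) + 1) ^ k) * C := by
            refine mul_le_mul_of_nonneg_right (mul_le_mul_of_nonneg_left hexp (by positivity)) hC0
        _ ≤ B m := by
            rw [hBdef, hAdef]
            calc 2 ^ k * ((k : ℝ) ^ k / ((m : ℝ) + 1) ^ k) * C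
                = (2 ^ k * C * (k : ℝ) ^ k) * (1 / ((m : ℝ) + 1) ^ k) := by ring
              _ ≤ (2 ^ k * C * ((k : ℝ) ^ k + 1)) * (1 / ((m : ℝ) + 1) ^ k) := by
                  refine mul_le_mul_of_nonneg_right ?_ (by positivity)
                  nlinarith [mul_nonneg (pow_nonneg (by norm_num : (0:ℝ) ≤ 2) k) hC0,
                    mul_nonneg (mul_nonneg (pow_nonneg (by norm_num : (0:ℝ) ≤ 2) k) hC0)
                      (by positivity : (0:ℝ) ≤ (k:ℝ)^k)]
  -- the key identity on Ioo 0 1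
  have heq : ∀ q ∈ Set.Ioo (0 : ℝ) 1,
      (1 - q) ^ k * ∑' n : ℕ, ((n : ℝ) + 1) ^ (k - 1) * q ^ (n + 1) / (1 - q ^ (n + 1))
        = ∑' m : ℕ, φ m q := by
    rintro q ⟨hq0, hq1⟩
    have hxm : ∀ m : ℕ, q ^ (m + 1) ∈ Set.Ioo (0 : ℝ) 1 :=
      fun m => ⟨pow_pos hq0 _, pow_lt_one₀ hq0.le hq1 (Nat.succ_ne_zero m)⟩
    have hF : ∀ m : ℕ, HasSum (fun n : ℕ => ((n : ℝ) + 1) ^ (k - 1) * (q ^ (m + 1)) ^ (n + 1))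
        ((q ^ (m + 1)) * ∑ j ∈ Finset.range (k - 1 + 1), e j * (1 / (1 - q ^ (m + 1)) ^ (j + 1))) :=
      fun m => lem_hasSum (k - 1) e hrep (hxm m)
    set f : ℕ → ℕ → ℝ := fun n m => ((n : ℝ) + 1) ^ (k - 1) * q ^ ((n + 1) * (m + 1)) with hfdef
    have hrow : ∀ n : ℕ, HasSum (f n)
        (((n : ℝ) + 1) ^ (k - 1) * q ^ (n + 1) / (1 - q ^ (n + 1))) := by
      intro n
      have hg : HasSum (fun m : ℕ => (q ^ (n + 1)) ^ m) (1 - q ^ (n + 1))⁻¹ :=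
        hasSum_geometric_of_lt_one (pow_nonneg hq0.le _) (hxm n).2
      have h := hg.mul_left (((n : ℝ) + 1) ^ (k - 1) * q ^ (n + 1))
      have hfun : (fun m : ℕ => (((n : ℝ) + 1) ^ (k - 1) * q ^ (n + 1)) * (q ^ (n + 1)) ^ m)
          = f n := by
        funext m; simp only [hfdef]; ring
      rw [hfun] at h
      rw [div_eq_mul_inv]
      exact h
    have hcol : ∀ m : ℕ, HasSum (fun n => f n m)
        ((q ^ (m + 1)) * ∑ j ∈ Finset.range (k - 1 + 1), e j * (1 / (1 - q ^ (m + 1)) ^ (j + 1))) := by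
      intro m
      have h := hF m
      have hfun : (fun n : ℕ => ((n : ℝ) + 1) ^ (k - 1) * (q ^ (m + 1)) ^ (n + 1))
          = fun n => f n m := by
        funext n; simp only [hfdef]; ring
      rwa [hfun] at h
    have hsummand : Summable (fun n : ℕ =>
        ((n : ℝ) + 1) ^ (k - 1) * q ^ (n + 1) / (1 - q ^ (n + 1))) := by
      have hFq := lem_hasSum (k - 1) e hrep (Set.mem_Ioo.mpr ⟨hq0, hq1⟩)
      refine Summable.of_nonneg_of_le
        (fun n => div_nonneg (by positivity) (by linarith [(hxm n).2])) (fun n => ?_)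
        (hFq.summable.mul_left (1 - q)⁻¹)
      have h1 : 1 - q ≤ 1 - q ^ (n + 1) := by
        have h2 : q ^ (n + 1) ≤ q ^ 1 := pow_le_pow_of_le_one hq0.le hq1.le (by omega)
        rw [pow_one] at h2
        linarith
      calc ((n : ℝ) + 1) ^ (k - 1) * q ^ (n + 1) / (1 - q ^ (n + 1))
          = (((n : ℝ) + 1) ^ (k - 1) * q ^ (n + 1)) * (1 - q ^ (n + 1))⁻¹ := div_eq_mul_inv _ _
        _ ≤ (((n : ℝ) + 1) ^ (k - 1) * q ^ (n + 1)) * (1 - q)⁻¹ := by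
            refine mul_le_mul_of_nonneg_left ?_ (by positivity)
            exact inv_anti₀ (by linarith) h1
        _ = (1 - q)⁻¹ * (((n : ℝ) + 1) ^ (k - 1) * q ^ (n + 1)) := mul_comm _ _
    have hfsum : Summable (Function.uncurry f) := by
      refine (summable_prod_of_nonneg ?_).mpr ⟨fun n => (hrow n).summable, ?_⟩
      · intro p
        simp only [Function.uncurry, hfdef]
        positivity
      · exact hsummand.congr fun n => ((hrow n).tsum_eq).symm
    have hswap : ∑' n : ℕ, ((n : ℝ) + 1) ^ (k - 1) * q ^ (n + 1) / (1 - q ^ (n + 1))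
        = ∑' m : ℕ, (q ^ (m + 1)) *
          ∑ j ∈ Finset.range (k - 1 + 1), e j * (1 / (1 - q ^ (m + 1)) ^ (j + 1)) := by
      calc ∑' n : ℕ, ((n : ℝ) + 1) ^ (k - 1) * q ^ (n + 1) / (1 - q ^ (n + 1))
          = ∑' (n : ℕ) (m : ℕ), f n m := tsum_congr fun n => ((hrow n).tsum_eq).symm
        _ = ∑' (m : ℕ) (n : ℕ), f n m :=
            (Summable.tsum_comm' hfsum (fun n => (hrow n).summable) (fun m => (hcol m).summable)).symm
        _ = _ := tsum_congr fun m => (hcol m).tsum_eq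
    rw [hswap, ← tsum_mul_left]
    refine tsum_congr fun m => ?_
    -- per-m algebra
    have hx0 : (0 : ℝ) < q ^ (m + 1) := (hxm m).1
    have hx1 : q ^ (m + 1) < 1 := (hxm m).2
    have hSq : (∑ i ∈ Finset.range (m + 1), q ^ i) * (1 - q) = 1 - q ^ (m + 1) := by
      linear_combination -(geom_sum_mul q (m + 1))
    have hSpos : (0 : ℝ) < ∑ i ∈ Finset.range (m + 1), q ^ i :=
      Finset.sum_pos (fun i _ => pow_pos hq0 i) Finset.nonempty_range_add_one
    have key : ∀ j ∈ Finset.range k, (1 - q) ^ k * (1 / (1 - q ^ (m + 1)) ^ (j + 1))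
        = ((∑ i ∈ Finset.range (m + 1), q ^ i)⁻¹) ^ k * (1 - q ^ (m + 1)) ^ (k - 1 - j) := by
      intro j hj
      have hjk : j < k := Finset.mem_range.mp hj
      have hx1' : (1 : ℝ) - q ^ (m + 1) ≠ 0 := by linarith
      have h2 : ((1 : ℝ) - q ^ (m + 1)) ^ (j + 1) ≠ 0 := pow_ne_zero _ hx1'
      have hsplit : ((1 : ℝ) - q ^ (m + 1)) ^ (k - 1 - j) * (1 - q ^ (m + 1)) ^ (j + 1)
          = (1 - q ^ (m + 1)) ^ k := by rw [← pow_add]; congr 1; omega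
      rw [mul_one_div, div_eq_iff h2, mul_assoc, hsplit, ← hSq, mul_pow, inv_pow,
        ← mul_assoc, inv_mul_cancel₀ (pow_ne_zero _ hSpos.ne'), one_mul]
    simp only [hφdef, hk1]
    simp only [Finset.mul_sum]
    refine Finset.sum_congr rfl fun j hj => ?_
    linear_combination (q ^ (m + 1) * e j) * key j hj
  -- summability of the bound
  have hBsum : Summable B := by
    have hs0 : Summable (fun n : ℕ => 1 / ((n : ℝ)) ^ k) :=
      Real.summable_one_div_nat_pow.mpr (by omega)
    have hs1 : Summable (fun n : ℕ => 1 / ((n : ℝ) + 1) ^ k) := by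
      have h2 := (summable_nat_add_iff 1).mpr hs0
      exact h2.congr fun n => by push_cast; ring
    rw [hBdef]
    exact hs1.mul_left A
  -- assemble
  have hbnd : ∀ᶠ q in nhdsWithin (1 : ℝ) (Set.Ioo 0 1), ∀ m : ℕ, ‖φ m q‖ ≤ B m := by
    filter_upwards [self_mem_nhdsWithin] with q hq m
    rw [Real.norm_eq_abs]
    exact hbound q hq m
  have hmain := tendsto_tsum_of_dominated_convergence (f := fun (q : ℝ) (m : ℕ) => φ m q)
    hBsum hlim hbnd
  rw [tsum_mul_left] at hmain
  refine Tendsto.congr' ?_ hmain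
  filter_upwards [self_mem_nhdsWithin] with q hq
  exact (heq q hq).symm
end

section
/- For integer k ≥ 2, lim_{q→1⁻} ζ_q(k) = ζ(k), where ζ_q(k) = ∑_{n≥1} q^{n(k−1)}/[n]_q^k. -/
/-!
Write `[n+1]_q = 1 + q + ⋯ + qⁿ`. Each summand of `ζ_q(k)` tends to `1/(n+1)ᵏ` as `q → 1`, so by
dominated convergence it suffices to bound the summands by `1/(n+1)ᵏ` uniformly in `q ∈ (0,1)`.
Splitting `q^((n+1)(k-1)) / [n+1]_qᵏ = (q^(n+1)/[n+1]_q)^(k-2) · q^(n+1)/[n+1]_q²`, the first factor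
is at most `1/(n+1)` because every `qʲ` with `j ≤ n` dominates `qⁿ`, and the second is at most
`1/(n+1)²` by Cauchy–Schwarz: `((n+1)·√(qⁿ))² ≤ (∑ qʲ)(∑ q^(n-j)) = [n+1]_q²`.
-/

open Finset Filter Topology

noncomputable def qZetaSummand (k : ℕ) (q : ℝ) (n : ℕ) : ℝ :=
  q ^ ((n + 1) * (k - 1)) / (((1 - q ^ (n + 1)) / (1 - q)) ^ k)

lemma one_sub_pow_div_one_sub {K : Type*} [Field K] {q : K} (hq : q ≠ 1) (n : ℕ) :
    (1 - q ^ n) / (1 - q) = ∑ j ∈ range n, q ^ j := by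
  rw [geom_sum_eq hq, ← neg_div_neg_eq, neg_sub, neg_sub]

lemma qZetaSummand_eq {k : ℕ} {q : ℝ} (hq : q ≠ 1) (n : ℕ) :
    qZetaSummand k q n = q ^ ((n + 1) * (k - 1)) / (∑ j ∈ range (n + 1), q ^ j) ^ k := by
  rw [qZetaSummand, one_sub_pow_div_one_sub hq]

lemma succ_mul_pow_le_geom_sum {R : Type*} [Semiring R] [PartialOrder R] [IsStrictOrderedRing R]
    {q : R} (hq0 : 0 ≤ q) (hq1 : q ≤ 1) (n : ℕ) :
    ((n : R) + 1) * q ^ n ≤ ∑ j ∈ range (n + 1), q ^ j := by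
  have h := card_nsmul_le_sum (range (n + 1)) (q ^ ·) (q ^ n) fun j hj =>
    pow_le_pow_of_le_one hq0 hq1 (Nat.lt_succ_iff.mp (mem_range.mp hj))
  simpa [nsmul_eq_mul] using h

lemma succ_sq_mul_pow_le_geom_sum_sq {q : ℝ} (hq : 0 ≤ q) (n : ℕ) :
    ((n : ℝ) + 1) ^ 2 * q ^ n ≤ (∑ j ∈ range (n + 1), q ^ j) ^ 2 := by
  have hcs := sum_sq_le_sum_mul_sum_of_sq_le_mul (range (n + 1)) (r := fun _ => √(q ^ n))
    (f := (q ^ ·)) (g := fun j => q ^ (n - j)) (fun _ _ => by positivity) (fun _ _ => by positivity)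
    fun j hj => by
      rw [Real.sq_sqrt (by positivity), ← pow_add,
        Nat.add_sub_cancel' (Nat.lt_succ_iff.mp (mem_range.mp hj))]
  have hreflect : ∑ j ∈ range (n + 1), q ^ (n - j) = ∑ j ∈ range (n + 1), q ^ j :=
    sum_range_reflect (q ^ ·) (n + 1)
  rw [hreflect, ← sq] at hcs
  simpa [mul_pow, Real.sq_sqrt (pow_nonneg hq n)] using hcs

lemma qZetaSummand_nonneg (k : ℕ) {q : ℝ} (hq0 : 0 ≤ q) (hq1 : q ≠ 1) (n : ℕ) :
    0 ≤ qZetaSummand k q n := by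
  rw [qZetaSummand_eq hq1]
  exact div_nonneg (pow_nonneg hq0 _) (pow_nonneg (geom_sum_pos hq0 n.succ_ne_zero).le _)

lemma qZetaSummand_le {k : ℕ} (hk : 2 ≤ k) {q : ℝ} (hq0 : 0 ≤ q) (hq1 : q < 1) (n : ℕ) :
    qZetaSummand k q n ≤ 1 / ((n : ℝ) + 1) ^ k := by
  obtain ⟨m, rfl⟩ := Nat.exists_eq_add_of_le' hk
  rw [qZetaSummand_eq hq1.ne]
  set S := ∑ j ∈ range (n + 1), q ^ j
  have hS : 0 < S := geom_sum_pos hq0 n.succ_ne_zero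
  have hn : (0 : ℝ) < n + 1 := n.cast_add_one_pos
  have hdecr : q ^ (n + 1) ≤ q ^ n := pow_le_pow_of_le_one hq0 hq1.le n.le_succ
  have hlin : q ^ (n + 1) / S ≤ 1 / (n + 1) := by
    rw [div_le_div_iff₀ hS hn, one_mul, mul_comm]
    exact (mul_le_mul_of_nonneg_left hdecr hn.le).trans (succ_mul_pow_le_geom_sum hq0 hq1.le n)
  have hquad : q ^ (n + 1) / S ^ 2 ≤ 1 / (n + 1) ^ 2 := by
    rw [div_le_div_iff₀ (pow_pos hS 2) (pow_pos hn 2), one_mul, mul_comm]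
    exact (mul_le_mul_of_nonneg_left hdecr (by positivity)).trans
      (succ_sq_mul_pow_le_geom_sum_sq hq0 n)
  calc q ^ ((n + 1) * (m + 2 - 1)) / S ^ (m + 2)
      = (q ^ (n + 1) / S) ^ m * (q ^ (n + 1) / S ^ 2) := by
        rw [show m + 2 - 1 = m + 1 by omega, mul_add_one, pow_add, pow_mul, pow_add S, div_pow,
          mul_div_mul_comm]
    _ ≤ (1 / (n + 1)) ^ m * (1 / (n + 1) ^ 2) := by gcongr
    _ = 1 / ((n : ℝ) + 1) ^ (m + 2) := by rw [← one_div_pow, ← one_div_pow, ← pow_add]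

lemma tendsto_qZetaSummand (k n : ℕ) :
    Tendsto (qZetaSummand k · n) (𝓝[≠] 1) (𝓝 (1 / ((n : ℝ) + 1) ^ k)) := by
  have hcont : ContinuousAt
      (fun q : ℝ => q ^ ((n + 1) * (k - 1)) / (∑ j ∈ range (n + 1), q ^ j) ^ k) 1 :=
    ContinuousAt.div (by fun_prop) (by fun_prop)
      (pow_ne_zero k (by simpa using n.cast_add_one_ne_zero))
  have h := hcont.tendsto.mono_left (nhdsWithin_le_nhds (s := {1}ᶜ))
  simp only [one_pow, sum_const, card_range, nsmul_eq_mul, mul_one, Nat.cast_add,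
    Nat.cast_one] at h
  refine h.congr' ?_
  filter_upwards [self_mem_nhdsWithin] with q hq
  exact (qZetaSummand_eq hq n).symm

theorem stmt_14 (k : ℕ) (hk : 2 ≤ k) :
    Filter.Tendsto
      (fun q : ℝ => ∑' n : ℕ, q ^ ((n + 1) * (k - 1)) / (((1 - q ^ (n + 1)) / (1 - q)) ^ k))
      (nhdsWithin 1 (Set.Ioo 0 1)) (nhds (∑' n : ℕ, 1 / ((n : ℝ) + 1) ^ k)) := by
  have hsum : Summable (fun n : ℕ => 1 / ((n : ℝ) + 1) ^ k) := by
    simpa using (summable_nat_add_iff 1).mpr (Real.summable_one_div_nat_pow.mpr hk)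
  have hnear : 𝓝[Set.Ioo 0 1] (1 : ℝ) ≤ 𝓝[≠] 1 := nhdsWithin_mono 1 fun q hq => hq.2.ne
  refine tendsto_tsum_of_dominated_convergence (f := qZetaSummand k) hsum
    (fun n => (tendsto_qZetaSummand k n).mono_left hnear) ?_
  filter_upwards [self_mem_nhdsWithin] with q hq n
  rw [Real.norm_of_nonneg (qZetaSummand_nonneg k hq.1.le hq.2.ne n)]
  exact qZetaSummand_le hk hq.1.le hq.2 n
end

section
/- For real t ∈ (0,1), complex α with Re(α) > 0, complex β, and integer M ≥ 2, the incomplete beta function b_t(α,β) = ∫_0^t u^{α−1}(1−u)^{β−1} du satisfies b_t(α,β) = ∑_{k=1}^{M−1} (−1)^{k−1} ((1−β)_{k−1}/(α)_k) t^{α+k−1}(1−t)^{β−k} + (−1)^{M−1} ((1−β)_{M−1}/(α)_{M−1}) b_t(α+M−1, β−M+1), where (x)_k = x(x+1)···(x+k−1). -/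
/-!
Integrating `d/du [u^α (1-u)^(β-1)] = α u^(α-1) (1-u)^(β-1) - (β-1) u^α (1-u)^(β-2)` over `[0, t]`
gives `α b_t(α, β) = t^α (1-t)^(β-1) + (β-1) b_t(α+1, β-1)`; the boundary term at `0` vanishes
because `Re α > 0`. Dividing by `α` and iterating `M - 1` times, the Pochhammer symbols collect the
successive factors `α + k` and `k + 1 - β`.
-/

/-- The incomplete beta function `b_t(α,β) = ∫_0^t u^{α-1}(1-u)^{β-1} du`. -/
noncomputable def incBeta (t : ℝ) (α β : ℂ) : ℂ :=
  ∫ u in (0 : ℝ)..t, (u : ℂ) ^ (α - 1) * (1 - (u : ℂ)) ^ (β - 1)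

open Complex Set

lemma intervalIntegrable_incBeta_integrand {t : ℝ} (ht : t < 1) {α : ℂ} (hα : 0 < α.re)
    (β : ℂ) :
    IntervalIntegrable (fun u : ℝ => (u : ℂ) ^ (α - 1) * (1 - (u : ℂ)) ^ (β - 1))
      MeasureTheory.volume 0 t := by
  refine (intervalIntegral.intervalIntegrable_cpow' (by simpa using hα)).mul_continuousOn ?_
  refine continuousOn_of_forall_continuousAt fun u hu => ?_
  have hu1 : u < 1 := hu.2.trans_lt (max_lt zero_lt_one ht)
  exact ((continuous_const.sub continuous_ofReal).continuousAt).cpow continuousAt_const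
    (by simpa using ofReal_mem_slitPlane.2 (sub_pos.2 hu1))

lemma hasDerivAt_cpow_mul_one_sub_cpow {x : ℝ} (hx0 : 0 < x) (hx1 : x < 1) (α β : ℂ) :
    HasDerivAt (fun u : ℝ => (u : ℂ) ^ α * (1 - (u : ℂ)) ^ β)
      (α * ((x : ℂ) ^ (α - 1) * (1 - (x : ℂ)) ^ β)
        - β * ((x : ℂ) ^ α * (1 - (x : ℂ)) ^ (β - 1))) x := by
  have hpow : HasDerivAt (fun z : ℂ => z ^ α) (α * (x : ℂ) ^ (α - 1)) x := by
    simpa using (hasDerivAt_id (x : ℂ)).cpow_const (c := α) (ofReal_mem_slitPlane.2 hx0)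
  have hpow' : HasDerivAt (fun z : ℂ => (1 - z) ^ β) (β * (1 - (x : ℂ)) ^ (β - 1) * -1) x :=
    ((hasDerivAt_id (x : ℂ)).const_sub 1).cpow_const
      (by simpa using ofReal_mem_slitPlane.2 (sub_pos.2 hx1))
  convert (hpow.mul hpow').comp_ofReal (e := fun z : ℂ => z ^ α * (1 - z) ^ β) using 1
  ring

lemma mul_incBeta {t : ℝ} (ht0 : 0 ≤ t) (ht1 : t < 1) {α : ℂ} (hα : 0 < α.re) (β : ℂ) :
    α * incBeta t α β
      = (t : ℂ) ^ α * (1 - (t : ℂ)) ^ (β - 1) + (β - 1) * incBeta t (α + 1) (β - 1) := by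
  have hF : ContinuousOn (fun u : ℝ => (u : ℂ) ^ α * (1 - (u : ℂ)) ^ (β - 1)) (Icc 0 t) := by
    refine continuousOn_of_forall_continuousAt fun u hu => ContinuousAt.mul ?_ ?_
    · exact (continuousAt_cpow_const_of_re_pos (Or.inl (by simpa using hu.1)) hα).comp
        continuous_ofReal.continuousAt
    · exact ((continuous_const.sub continuous_ofReal).continuousAt).cpow continuousAt_const
        (by simpa using ofReal_mem_slitPlane.2 (sub_pos.2 (hu.2.trans_lt ht1)))
  have hint := (intervalIntegrable_incBeta_integrand ht1 hα β).const_mul α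
  have hint' := (intervalIntegrable_incBeta_integrand ht1
    (α := α + 1) (by rw [add_re, one_re]; linarith) (β - 1)).const_mul (β - 1)
  simp only [add_sub_cancel_right] at hint'
  have hFTC := intervalIntegral.integral_eq_sub_of_hasDerivAt_of_le ht0 hF
    (fun x hx => hasDerivAt_cpow_mul_one_sub_cpow hx.1 (hx.2.trans ht1) α (β - 1))
    (hint.sub hint')
  rw [intervalIntegral.integral_sub hint hint', intervalIntegral.integral_const_mul,
    intervalIntegral.integral_const_mul] at hFTC
  simp only [incBeta, add_sub_cancel_right]
  simp only [ofReal_zero, zero_cpow (ne_zero_of_re_pos hα), sub_zero, one_cpow, mul_one] at hFTC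
  linear_combination hFTC

lemma ascPochhammer_eval_ne_zero_of_re_pos {α : ℂ} (hα : 0 < α.re) (n : ℕ) :
    (ascPochhammer ℂ n).eval α ≠ 0 := by
  rw [Ne, ascPochhammer_eval_eq_zero_iff]
  rintro ⟨k, -, hk⟩
  have := congrArg re hk
  simp only [natCast_re, neg_re] at this
  linarith [k.cast_nonneg (α := ℝ)]

lemma incBeta_eq_sum_add_incBeta {t : ℝ} (ht0 : 0 ≤ t) (ht1 : t < 1) {α : ℂ} (hα : 0 < α.re)
    (β : ℂ) (n : ℕ) :
    incBeta t α β
      = ∑ k ∈ Finset.range n, (-1 : ℂ) ^ k *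
          ((ascPochhammer ℂ k).eval (1 - β) / (ascPochhammer ℂ (k + 1)).eval α) *
          ((t : ℂ) ^ (α + k) * (1 - (t : ℂ)) ^ (β - k - 1))
        + (-1 : ℂ) ^ n * ((ascPochhammer ℂ n).eval (1 - β) / (ascPochhammer ℂ n).eval α) *
          incBeta t (α + n) (β - n) := by
  induction n with
  | zero => simp
  | succ n ih =>
    have hαn : 0 < (α + n).re := by rw [add_re, natCast_re]; positivity
    have hrec := mul_incBeta ht0 ht1 hαn (β - n)
    have hP := ascPochhammer_eval_ne_zero_of_re_pos hα n
    have hαn0 := ne_zero_of_re_pos hαn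
    rw [ih, Finset.sum_range_succ, add_assoc]
    congr 1
    rw [ascPochhammer_succ_eval, ascPochhammer_succ_eval]
    push_cast
    rw [← add_assoc, ← sub_sub]
    field_simp
    linear_combination (-1 : ℂ) ^ n * (ascPochhammer ℂ n).eval (1 - β) * hrec

theorem stmt_16 (t : ℝ) (ht0 : 0 < t) (ht1 : t < 1) (α β : ℂ) (hα : 0 < α.re)
    (M : ℕ) (hM : 2 ≤ M) :
    incBeta t α β
      = ∑ k ∈ Finset.Icc 1 (M - 1), (-1 : ℂ) ^ (k - 1) *
          ((ascPochhammer ℂ (k - 1)).eval (1 - β) / (ascPochhammer ℂ k).eval α) *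
          ((t : ℂ) ^ (α + (k : ℂ) - 1) * (1 - (t : ℂ)) ^ (β - (k : ℂ)))
        + (-1 : ℂ) ^ (M - 1) *
          ((ascPochhammer ℂ (M - 1)).eval (1 - β) / (ascPochhammer ℂ (M - 1)).eval α) *
          incBeta t (α + (M : ℂ) - 1) (β - (M : ℂ) + 1) := by
  obtain ⟨n, rfl⟩ : ∃ n, M = n + 1 := ⟨M - 1, by omega⟩
  rw [incBeta_eq_sum_add_incBeta ht0.le ht1 hα β n, ← Finset.Ico_add_one_right_eq_Icc,
    Finset.sum_Ico_eq_sum_range, Nat.add_sub_cancel]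
  push_cast
  congr 2
  · funext k
    rw [add_tsub_cancel_left, add_comm 1 k]
    ring_nf
  · congr 1 <;> ring
end
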